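/- arXiv:1704.05421 — 6 statements merged into one kernel-verified Lean document; each statement's English description precedes it below -/
import Mathlib

section
/- In the block setting, let A : Matrix J J ℂ be positive semidefinite, let Φ denote the pinching, and let λ > 0 be a real number. Then λ·I + A and λ·I + Φ(A) are positive definite (hence invertible), and the following two Loewner-order inequalities hold: (i) Φ(A·(λ·I + A)⁻¹) ≤ Φ(A)·(λ·I + Φ(A))⁻¹; (ii) Φ(A)²·(λ·I + Φ(A))⁻¹ ≤ Φ(A²·(λ·I + A)⁻¹). In each of (i) and (ii), equality holds if and only if A is block diagonal (equivalently Φ(A) = A). -/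
open scoped ComplexOrder

/-- The `i`-th principal diagonal block of a matrix indexed by the disjoint-union index
type `(i : Fin k) × Fin (n i)`. -/
def diagBlock {k : ℕ} {n : Fin k → ℕ}
    (C : Matrix ((i : Fin k) × Fin (n i)) ((i : Fin k) × Fin (n i)) ℂ) (i : Fin k) :
    Matrix (Fin (n i)) (Fin (n i)) ℂ :=
  fun a b => C ⟨i, a⟩ ⟨i, b⟩

/-- A matrix indexed by the disjoint-union index type is block diagonal if all entries
outside the principal diagonal blocks vanish. -/
def IsBlockDiagonal {k : ℕ} {n : Fin k → ℕ}
    (C : Matrix ((i : Fin k) × Fin (n i)) ((i : Fin k) × Fin (n i)) ℂ) : Prop :=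
  ∀ p q : (i : Fin k) × Fin (n i), p.1 ≠ q.1 → C p q = 0

/-- The pinching of a matrix indexed by the disjoint-union index type: the block diagonal
matrix with the same principal diagonal blocks. -/
def pinch {k : ℕ} {n : Fin k → ℕ}
    (C : Matrix ((i : Fin k) × Fin (n i)) ((i : Fin k) × Fin (n i)) ℂ) :
    Matrix ((i : Fin k) × Fin (n i)) ((i : Fin k) × Fin (n i)) ℂ :=
  fun p q => if p.1 = q.1 then C p q else 0

open Matrix

section PinchAux

variable {k : ℕ} {n : Fin k → ℕ}

private lemma pinch_one : pinch (1 : Matrix ((i : Fin k) × Fin (n i)) ((i : Fin k) × Fin (n i)) ℂ) = 1 := by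
  ext p q
  by_cases h : p.1 = q.1
  · simp [pinch, h]
  · have hpq : p ≠ q := fun hpq => h (by rw [hpq])
    simp [pinch, h, Matrix.one_apply_ne hpq]

private lemma pinch_add (C D : Matrix ((i : Fin k) × Fin (n i)) ((i : Fin k) × Fin (n i)) ℂ) :
    pinch (C + D) = pinch C + pinch D := by
  ext p q; by_cases h : p.1 = q.1 <;> simp [pinch, h]

private lemma pinch_sub (C D : Matrix ((i : Fin k) × Fin (n i)) ((i : Fin k) × Fin (n i)) ℂ) :
    pinch (C - D) = pinch C - pinch D := by
  ext p q; by_cases h : p.1 = q.1 <;> simp [pinch, h]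

private lemma pinch_smul (c : ℂ) (C : Matrix ((i : Fin k) × Fin (n i)) ((i : Fin k) × Fin (n i)) ℂ) :
    pinch (c • C) = c • pinch C := by
  ext p q; by_cases h : p.1 = q.1 <;> simp [pinch, h]

private lemma pinch_idem (C : Matrix ((i : Fin k) × Fin (n i)) ((i : Fin k) × Fin (n i)) ℂ) :
    pinch (pinch C) = pinch C := by
  ext p q; by_cases h : p.1 = q.1 <;> simp [pinch, h]

private lemma pinch_eq_self {C : Matrix ((i : Fin k) × Fin (n i)) ((i : Fin k) × Fin (n i)) ℂ}
    (h : IsBlockDiagonal C) : pinch C = C := by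
  ext p q
  by_cases hpq : p.1 = q.1
  · simp [pinch, hpq]
  · simp [pinch, hpq, h p q hpq]

private lemma isBlockDiagonal_of_pinch_eq
    {C : Matrix ((i : Fin k) × Fin (n i)) ((i : Fin k) × Fin (n i)) ℂ}
    (h : pinch C = C) : IsBlockDiagonal C := fun p q hpq => by
  rw [← h]; exact if_neg hpq

private lemma pinch_mul_left {X : Matrix ((i : Fin k) × Fin (n i)) ((i : Fin k) × Fin (n i)) ℂ}
    (hX : IsBlockDiagonal X) (Y : Matrix ((i : Fin k) × Fin (n i)) ((i : Fin k) × Fin (n i)) ℂ) :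
    pinch (X * Y) = X * pinch Y := by
  ext p q
  show (if p.1 = q.1 then (X * Y) p q else 0) = (X * pinch Y) p q
  rw [Matrix.mul_apply]
  by_cases h : p.1 = q.1
  · rw [if_pos h, Matrix.mul_apply]
    refine Finset.sum_congr rfl fun r _ => ?_
    show X p r * Y r q = X p r * (if r.1 = q.1 then Y r q else 0)
    by_cases hr : r.1 = q.1
    · rw [if_pos hr]
    · rw [if_neg hr, mul_zero, hX p r (fun hc => hr (hc ▸ h)), zero_mul]
  · rw [if_neg h]
    refine (Finset.sum_eq_zero fun r _ => ?_).symm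
    show X p r * (if r.1 = q.1 then Y r q else 0) = 0
    by_cases hr : r.1 = q.1
    · rw [hX p r (fun hc => h (hc.trans hr)), zero_mul]
    · rw [if_neg hr, mul_zero]

private lemma pinch_mul_right {Y : Matrix ((i : Fin k) × Fin (n i)) ((i : Fin k) × Fin (n i)) ℂ}
    (hY : IsBlockDiagonal Y) (X : Matrix ((i : Fin k) × Fin (n i)) ((i : Fin k) × Fin (n i)) ℂ) :
    pinch (X * Y) = pinch X * Y := by
  ext p q
  show (if p.1 = q.1 then (X * Y) p q else 0) = (pinch X * Y) p q
  rw [Matrix.mul_apply]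
  by_cases h : p.1 = q.1
  · rw [if_pos h, Matrix.mul_apply]
    refine Finset.sum_congr rfl fun r _ => ?_
    show X p r * Y r q = (if p.1 = r.1 then X p r else 0) * Y r q
    by_cases hr : p.1 = r.1
    · rw [if_pos hr]
    · rw [if_neg hr, zero_mul,
        hY r q (fun hc : r.1 = q.1 => hr (by rw [h, ← hc])), mul_zero]
  · rw [if_neg h]
    refine (Finset.sum_eq_zero fun r _ => ?_).symm
    show (if p.1 = r.1 then X p r else 0) * Y r q = 0
    by_cases hr : p.1 = r.1
    · rw [hY r q (fun hc => h (hr.trans hc)), mul_zero]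
    · rw [if_neg hr, zero_mul]

private lemma pinch_conjTranspose
    (C : Matrix ((i : Fin k) × Fin (n i)) ((i : Fin k) × Fin (n i)) ℂ) :
    (pinch C)ᴴ = pinch Cᴴ := by
  ext p q
  show star (if q.1 = p.1 then C q p else 0) = (if p.1 = q.1 then Cᴴ p q else 0)
  by_cases h : p.1 = q.1
  · rw [if_pos h.symm, if_pos h]
    rfl
  · rw [if_neg (fun hc : q.1 = p.1 => h hc.symm), if_neg h, star_zero]

/-- restriction of a vector to the `i`-th block -/
private def blkres (i : Fin k) (x : ((i : Fin k) × Fin (n i)) → ℂ) :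
    ((i : Fin k) × Fin (n i)) → ℂ :=
  fun p => if p.1 = i then x p else 0

private lemma quad_pinch (C : Matrix ((i : Fin k) × Fin (n i)) ((i : Fin k) × Fin (n i)) ℂ)
    (x : ((i : Fin k) × Fin (n i)) → ℂ) :
    star x ⬝ᵥ (pinch C *ᵥ x) = ∑ i : Fin k, star (blkres i x) ⬝ᵥ (C *ᵥ blkres i x) := by
  have hsum : ∀ (p q : (i : Fin k) × Fin (n i)) (t : ℂ),
      (∑ i : Fin k, if p.1 = i ∧ q.1 = i then t else 0) = if p.1 = q.1 then t else 0 := by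
    intro p q t
    by_cases h : p.1 = q.1
    · rw [if_pos h, Finset.sum_eq_single p.1]
      · simp [h]
      · intro i _ hi
        rw [if_neg]
        rintro ⟨h1, -⟩
        exact hi h1.symm
      · simp
    · rw [if_neg h]
      refine Finset.sum_eq_zero fun i _ => ?_
      rw [if_neg]
      rintro ⟨h1, h2⟩
      exact h (h1.trans h2.symm)
  have hR : ∀ i, star (blkres i x) ⬝ᵥ (C *ᵥ blkres i x)
      = ∑ p, ∑ q, if p.1 = i ∧ q.1 = i then star (x p) * (C p q * x q) else 0 := by
    intro i
    simp only [dotProduct, Matrix.mulVec, dotProduct, Finset.mul_sum, blkres, Pi.star_apply]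
    refine Finset.sum_congr rfl fun p _ => Finset.sum_congr rfl fun q _ => ?_
    by_cases hp : p.1 = i <;> by_cases hq : q.1 = i <;>
      simp [hp, hq, mul_comm, mul_left_comm]
  rw [Finset.sum_congr rfl fun i _ => hR i, Finset.sum_comm]
  simp only [dotProduct, Matrix.mulVec, dotProduct, Finset.mul_sum, Pi.star_apply]
  refine Finset.sum_congr rfl fun p _ => ?_
  rw [Finset.sum_comm]
  refine Finset.sum_congr rfl fun q _ => ?_
  rw [hsum p q (star (x p) * (C p q * x q))]
  by_cases h : p.1 = q.1 <;> simp [pinch, h]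

private lemma psd_pinch {M : Matrix ((i : Fin k) × Fin (n i)) ((i : Fin k) × Fin (n i)) ℂ}
    (hM : M.PosSemidef) : (pinch M).PosSemidef := by
  refine Matrix.PosSemidef.of_dotProduct_mulVec_nonneg ?_ fun x => ?_
  · show (pinch M)ᴴ = pinch M
    rw [pinch_conjTranspose, hM.1.eq]
  · rw [quad_pinch]
    exact Finset.sum_nonneg fun i _ => hM.dotProduct_mulVec_nonneg _

private lemma smul_psd {c : ℝ} (hc : 0 ≤ c)
    {M : Matrix ((i : Fin k) × Fin (n i)) ((i : Fin k) × Fin (n i)) ℂ}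
    (hM : M.PosSemidef) : ((c : ℂ) • M).PosSemidef := by
  refine Matrix.PosSemidef.of_dotProduct_mulVec_nonneg ?_ fun x => ?_
  · show ((c : ℂ) • M)ᴴ = (c : ℂ) • M
    rw [Matrix.conjTranspose_smul, hM.1.eq]
    simp
  · rw [Matrix.smul_mulVec, dotProduct_smul, smul_eq_mul]
    exact mul_nonneg (by exact_mod_cast hc) (hM.dotProduct_mulVec_nonneg x)

private lemma posdef_smul_one {c : ℝ} (hc : 0 < c) :
    ((c : ℂ) • (1 : Matrix ((i : Fin k) × Fin (n i)) ((i : Fin k) × Fin (n i)) ℂ)).PosDef := by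
  refine Matrix.PosDef.of_dotProduct_mulVec_pos ?_ fun x hx => ?_
  · show ((c : ℂ) • (1 : Matrix _ _ ℂ))ᴴ = (c : ℂ) • 1
    rw [Matrix.conjTranspose_smul, Matrix.conjTranspose_one]
    simp
  · rw [Matrix.smul_mulVec, Matrix.one_mulVec, dotProduct_smul, smul_eq_mul]
    exact mul_pos (by exact_mod_cast hc) (Matrix.dotProduct_star_self_pos_iff.mpr hx)

end PinchAux

/-- Resolvent-type inequalities for the pinching: for a positive semidefinite `A` in the
block setting and a real `λ > 0`, the matrices `λ•I + A` and `λ•I + Φ(A)` are positive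
definite, `Φ(A (λ•I + A)⁻¹) ≤ Φ(A) (λ•I + Φ(A))⁻¹` and
`Φ(A)² (λ•I + Φ(A))⁻¹ ≤ Φ(A² (λ•I + A)⁻¹)` in the Loewner order, and in each case
equality holds iff `A` is block diagonal (equivalently `Φ(A) = A`). -/
theorem pinch_resolvent_inequalities {k : ℕ} {n : Fin k → ℕ} (hn : ∀ i, 0 < n i)
    {A : Matrix ((i : Fin k) × Fin (n i)) ((i : Fin k) × Fin (n i)) ℂ}
    (hA : A.PosSemidef) {l : ℝ} (hl : 0 < l) :
    ((l : ℂ) • 1 + A).PosDef ∧ ((l : ℂ) • 1 + pinch A).PosDef ∧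
      (pinch A * ((l : ℂ) • 1 + pinch A)⁻¹ - pinch (A * ((l : ℂ) • 1 + A)⁻¹)).PosSemidef ∧
      (pinch (A * A * ((l : ℂ) • 1 + A)⁻¹)
        - pinch A * pinch A * ((l : ℂ) • 1 + pinch A)⁻¹).PosSemidef ∧
      (pinch (A * ((l : ℂ) • 1 + A)⁻¹) = pinch A * ((l : ℂ) • 1 + pinch A)⁻¹ ↔
        IsBlockDiagonal A) ∧
      (pinch A * pinch A * ((l : ℂ) • 1 + pinch A)⁻¹ = pinch (A * A * ((l : ℂ) • 1 + A)⁻¹) ↔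
        IsBlockDiagonal A) := by
  classical
  set B : Matrix ((i : Fin k) × Fin (n i)) ((i : Fin k) × Fin (n i)) ℂ := (l : ℂ) • 1 + A
    with hBdef
  set PB : Matrix ((i : Fin k) × Fin (n i)) ((i : Fin k) × Fin (n i)) ℂ := (l : ℂ) • 1 + pinch A
    with hPBdef
  have hBpd : B.PosDef := (posdef_smul_one hl).add_posSemidef hA
  have hPBpd : PB.PosDef := (posdef_smul_one hl).add_posSemidef (psd_pinch hA)
  have hBu : IsUnit B.det := hBpd.det_pos.ne'.isUnit
  have hPBu : IsUnit PB.det := hPBpd.det_pos.ne'.isUnit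
  have hBB : B * B⁻¹ = 1 := Matrix.mul_nonsing_inv _ hBu
  have hBB' : B⁻¹ * B = 1 := Matrix.nonsing_inv_mul _ hBu
  have hPBB : PB * PB⁻¹ = 1 := Matrix.mul_nonsing_inv _ hPBu
  have hPBB' : PB⁻¹ * PB = 1 := Matrix.nonsing_inv_mul _ hPBu
  have hpinchB : pinch B = PB := by
    rw [hBdef, pinch_add, pinch_smul, pinch_one]
  have hPBbd : IsBlockDiagonal PB := by
    refine isBlockDiagonal_of_pinch_eq ?_
    rw [hPBdef, pinch_add, pinch_smul, pinch_one, pinch_idem]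
  have hPpinch : pinch (PB⁻¹) = PB⁻¹ := by
    have h1 : PB * pinch (PB⁻¹) = 1 := by
      rw [← pinch_mul_left hPBbd, hPBB, pinch_one]
    exact (Matrix.inv_eq_right_inv h1).symm
  have hPbd : IsBlockDiagonal (PB⁻¹) := isBlockDiagonal_of_pinch_eq hPpinch
  -- Hermitian facts
  have hBinvh : B⁻¹.IsHermitian := hBpd.isHermitian.inv
  have hPinvh : PB⁻¹.IsHermitian := hPBpd.isHermitian.inv
  set W : Matrix ((i : Fin k) × Fin (n i)) ((i : Fin k) × Fin (n i)) ℂ := B⁻¹ - PB⁻¹ with hWdef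
  have hWh : Wᴴ = W := by
    rw [hWdef, Matrix.conjTranspose_sub, hBinvh.eq, hPinvh.eq]
  -- key identity : pinch (W * B * W) = pinch B⁻¹ - PB⁻¹
  have e1 : W * B * W = B⁻¹ - PB⁻¹ - PB⁻¹ + PB⁻¹ * (B * PB⁻¹) := by
    have h1 : B⁻¹ * (B * B⁻¹) = B⁻¹ := by rw [hBB, Matrix.mul_one]
    have h2 : B⁻¹ * (B * PB⁻¹) = PB⁻¹ := by rw [← Matrix.mul_assoc, hBB', Matrix.one_mul]
    have h3 : PB⁻¹ * (B * B⁻¹) = PB⁻¹ := by rw [hBB, Matrix.mul_one]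
    rw [hWdef]
    simp only [Matrix.sub_mul, Matrix.mul_sub, Matrix.mul_assoc, h1, h2, h3]
    abel
  have hkey : pinch (W * B * W) = pinch B⁻¹ - PB⁻¹ := by
    have h4 : pinch (PB⁻¹ * (B * PB⁻¹)) = PB⁻¹ := by
      rw [pinch_mul_left hPbd, pinch_mul_right hPbd, hpinchB, hPBB, Matrix.mul_one]
    rw [e1, pinch_add, pinch_sub, pinch_sub, hPpinch, h4]
    abel
  have hWBWpsd : (W * B * W).PosSemidef := by
    have := hBpd.posSemidef.conjTranspose_mul_mul_same W
    rwa [hWh] at this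
  have hDpsd : (pinch B⁻¹ - PB⁻¹).PosSemidef := by
    rw [← hkey]; exact psd_pinch hWBWpsd
  -- algebraic identities
  have hAeq : A = B - (l : ℂ) • 1 := by rw [hBdef]; abel
  have hPAeq : pinch A = PB - (l : ℂ) • 1 := by rw [hPBdef]; abel
  have id1 : A * B⁻¹ = 1 - (l : ℂ) • B⁻¹ := by
    rw [hAeq, Matrix.sub_mul, hBB, Matrix.smul_mul, Matrix.one_mul]
  have id1' : pinch A * PB⁻¹ = 1 - (l : ℂ) • PB⁻¹ := by
    rw [hPAeq, Matrix.sub_mul, hPBB, Matrix.smul_mul, Matrix.one_mul]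
  have id2 : A * A * B⁻¹ = A - (l : ℂ) • 1 + (l : ℂ) • ((l : ℂ) • B⁻¹) := by
    rw [Matrix.mul_assoc, id1, Matrix.mul_sub, Matrix.mul_one, Matrix.mul_smul, id1,
      smul_sub]
    abel
  have id2' : pinch A * pinch A * PB⁻¹
      = pinch A - (l : ℂ) • 1 + (l : ℂ) • ((l : ℂ) • PB⁻¹) := by
    rw [Matrix.mul_assoc, id1', Matrix.mul_sub, Matrix.mul_one, Matrix.mul_smul, id1',
      smul_sub]
    abel
  have claim1 : pinch A * PB⁻¹ - pinch (A * B⁻¹) = (l : ℂ) • (pinch B⁻¹ - PB⁻¹) := by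
    rw [id1', id1, pinch_sub, pinch_one, pinch_smul, smul_sub]
    abel
  have claim2 : pinch (A * A * B⁻¹) - pinch A * pinch A * PB⁻¹
      = (l : ℂ) • ((l : ℂ) • (pinch B⁻¹ - PB⁻¹)) := by
    rw [id2, id2', pinch_add, pinch_sub, pinch_smul, pinch_smul, pinch_smul, pinch_one]
    simp only [smul_sub]
    abel
  -- central equivalence
  have hcent : pinch B⁻¹ - PB⁻¹ = 0 ↔ IsBlockDiagonal A := by
    constructor
    · intro h0
      have hpinch0 : pinch (W * B * W) = 0 := by rw [hkey, h0]
      have hN : ∀ p : (i : Fin k) × Fin (n i), (W * B * W) p p = 0 := by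
        intro p
        have h1 : pinch (W * B * W) p p = (W * B * W) p p := by simp [pinch]
        rw [← h1, hpinch0]
        rfl
      open scoped MatrixOrder in
      set S := CFC.sqrt B with hSdef
      open scoped MatrixOrder in
      have hS2 : S * S = B := CFC.sqrt_mul_sqrt_self B hBpd.posSemidef.nonneg
      open scoped MatrixOrder in
      have hSh : Sᴴ = S := (CFC.sqrt_nonneg B).isSelfAdjoint.star_eq
      have hWBW : W * B * W = (S * W)ᴴ * (S * W) := by
        rw [Matrix.conjTranspose_mul, hSh, hWh, ← hS2]
        simp only [Matrix.mul_assoc]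
      have hSW : S * W = 0 := by
        ext q p
        have h1 : ((S * W)ᴴ * (S * W)) p p = 0 := by rw [← hWBW]; exact hN p
        have h2 : star (fun r => (S * W) r p) ⬝ᵥ (fun r => (S * W) r p) = 0 := by
          rw [← h1, Matrix.mul_apply]
          simp [dotProduct, Matrix.conjTranspose_apply]
        have h3 := dotProduct_star_self_eq_zero.mp h2
        have := congrFun h3 q
        simpa using this
      have hBW : B * W = 0 := by rw [← hS2, Matrix.mul_assoc, hSW, Matrix.mul_zero]
      have hW0 : W = 0 := by
        calc W = (B⁻¹ * B) * W := by rw [hBB', Matrix.one_mul]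
        _ = B⁻¹ * (B * W) := by rw [Matrix.mul_assoc]
        _ = 0 := by rw [hBW, Matrix.mul_zero]
      have hBinvP : B⁻¹ = PB⁻¹ := by
        have := sub_eq_zero.mp (hWdef ▸ hW0)
        exact this
      have hBPB : B = PB := by
        calc B = B⁻¹⁻¹ := (Matrix.nonsing_inv_nonsing_inv B hBu).symm
        _ = PB⁻¹⁻¹ := by rw [hBinvP]
        _ = PB := Matrix.nonsing_inv_nonsing_inv PB hPBu
      have hApA : A = pinch A := by
        have h5 : (l : ℂ) • 1 + A = (l : ℂ) • 1 + pinch A := by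
          rw [← hBdef, ← hPBdef, hBPB]
        exact add_left_cancel h5
      exact isBlockDiagonal_of_pinch_eq hApA.symm
    · intro hbd
      have hAbd : pinch A = A := pinch_eq_self hbd
      have hPBeqB : PB = B := by rw [hPBdef, hBdef, hAbd]
      have hBbd : IsBlockDiagonal B := by
        refine isBlockDiagonal_of_pinch_eq ?_
        rw [hpinchB, hPBeqB]
      have hpinchBinv : pinch B⁻¹ = B⁻¹ := by
        have h1 : B * pinch (B⁻¹) = 1 := by
          rw [← pinch_mul_left hBbd, hBB, pinch_one]
        exact (Matrix.inv_eq_right_inv h1).symm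
      rw [hpinchBinv, hPBeqB, sub_self]
  have hlC : (l : ℂ) ≠ 0 := by exact_mod_cast hl.ne'
  refine ⟨hBpd, hPBpd, ?_, ?_, ?_, ?_⟩
  · rw [claim1]; exact smul_psd hl.le hDpsd
  · rw [claim2]; exact smul_psd hl.le (smul_psd hl.le hDpsd)
  · constructor
    · intro heq
      apply hcent.mp
      have h0 : (l : ℂ) • (pinch B⁻¹ - PB⁻¹) = 0 := by
        rw [← claim1, heq, sub_self]
      exact (smul_eq_zero.mp h0).resolve_left hlC
    · intro hbd
      have hD0 := hcent.mpr hbd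
      have := claim1
      rw [hD0, smul_zero, sub_eq_zero] at this
      exact this.symm
  · constructor
    · intro heq
      apply hcent.mp
      have h0 : (l : ℂ) • ((l : ℂ) • (pinch B⁻¹ - PB⁻¹)) = 0 := by
        rw [← claim2, heq, sub_self]
      exact (smul_eq_zero.mp ((smul_eq_zero.mp h0).resolve_left hlC)).resolve_left hlC
    · intro hbd
      have hD0 := hcent.mpr hbd
      have := claim2
      rw [hD0, smul_zero, smul_zero, sub_eq_zero] at this
      exact this.symm
end

section
/- In the block setting, let A : Matrix J J ℂ be positive definite and let Φ denote the pinching. Then Φ(A) is positive definite, I + Φ(A)⁻¹ and I + A⁻¹ are positive definite, and det(I + Φ(A)⁻¹) ≤ det(I + A⁻¹) (both determinants are positive reals). Equality holds if and only if A is block diagonal (equivalently Φ(A) = A). -/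
open scoped ComplexOrder

section AuxPinch
set_option linter.unusedSectionVars false
open Matrix
open scoped ComplexOrder
open scoped MatrixOrder
variable {m l : Type*} [Fintype m] [DecidableEq m] [Fintype l] [DecidableEq l]


/-- det(1+E) ≥ 1 for psd E, with equality iff E = 0. -/
lemma det_one_add_psd {E : Matrix m m ℂ} (hE : E.PosSemidef) :
    1 ≤ (1 + E).det ∧ ((1 + E).det = 1 ↔ E = 0) := by
  have hH := hE.isHermitian
  set U : Matrix m m ℂ := (hH.eigenvectorUnitary : Matrix m m ℂ) with hU
  have hspec : E = U * diagonal (RCLike.ofReal ∘ hH.eigenvalues) * star U := hH.spectral_theorem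
  have hUU : U * star U = 1 := (Matrix.mem_unitaryGroup_iff).mp hH.eigenvectorUnitary.2
  have hdetU : U.det * (star U).det = 1 := by rw [← det_mul, hUU, det_one]
  have key : (1 + E).det = ∏ i, (1 + (hH.eigenvalues i : ℂ)) := by
    have h1 : (1 : Matrix m m ℂ) + E
        = U * (1 + diagonal (RCLike.ofReal ∘ hH.eigenvalues)) * star U := by
      rw [Matrix.mul_add, Matrix.add_mul, Matrix.mul_one, hUU, ← hspec]
    have h2 : (1 : Matrix m m ℂ) + diagonal (RCLike.ofReal ∘ hH.eigenvalues)
        = diagonal (fun i => 1 + (hH.eigenvalues i : ℂ)) := by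
      rw [← diagonal_one, diagonal_add]
      rfl
    rw [h1, det_mul, det_mul, h2, det_diagonal]
    ring_nf
    rw [mul_right_comm, hdetU, one_mul]
  have hnn : ∀ i, 0 ≤ hH.eigenvalues i := hE.eigenvalues_nonneg
  have hprod : (∏ i, (1 + (hH.eigenvalues i : ℂ))) = ((∏ i, (1 + hH.eigenvalues i) : ℝ) : ℂ) := by
    push_cast; rfl
  have hone_le : (1:ℝ) ≤ ∏ i, (1 + hH.eigenvalues i) := by
    calc (1:ℝ) = ∏ _i : m, (1:ℝ) := by rw [Finset.prod_const_one]
    _ ≤ ∏ i, (1 + hH.eigenvalues i) :=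
      Finset.prod_le_prod (fun i _ => zero_le_one) (fun i _ => by linarith [hnn i])
  refine ⟨by rw [key, hprod]; exact_mod_cast hone_le, ?_, ?_⟩
  · intro h
    rw [key, hprod] at h
    have h' : (∏ i, (1 + hH.eigenvalues i) : ℝ) = 1 := by exact_mod_cast h
    by_contra hne
    -- some eigenvalue is nonzero
    have : ∃ i, hH.eigenvalues i ≠ 0 := by
      by_contra hz
      push_neg at hz
      apply hne
      rw [hspec]
      have : diagonal (RCLike.ofReal ∘ hH.eigenvalues) = (0 : Matrix m m ℂ) := by
        ext i j
        rcases eq_or_ne i j with rfl | hij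
        · simp [hz i]
        · simp [diagonal_apply_ne _ hij]
      rw [this, Matrix.mul_zero, Matrix.zero_mul]
    obtain ⟨i, hi⟩ := this
    have hlt : (1:ℝ) < ∏ i, (1 + hH.eigenvalues i) := by
      have := Finset.prod_lt_prod (f := fun _ : m => (1:ℝ))
        (g := fun i => 1 + hH.eigenvalues i) (s := Finset.univ)
        (fun i _ => one_pos) (fun i _ => by linarith [hnn i])
        ⟨i, Finset.mem_univ i, by have := lt_of_le_of_ne (hnn i) (Ne.symm hi); linarith⟩
      simpa using this
    linarith
  · rintro rfl
    simp

/-- psd with nonzero det is posdef -/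
lemma posDef_of_posSemidef_det_ne_zero {M : Matrix m m ℂ} (hM : M.PosSemidef)
    (hdet : M.det ≠ 0) : M.PosDef := by
  refine Matrix.PosDef.of_dotProduct_mulVec_pos hM.isHermitian (fun x hx => ?_)
  have h1 : 0 ≤ star x ⬝ᵥ M *ᵥ x := hM.dotProduct_mulVec_nonneg x
  rcases h1.lt_or_eq with h | h
  · exact h
  · exfalso
    have := (hM.dotProduct_mulVec_zero_iff x).mp h.symm
    have hinj : Function.Injective (M.mulVec) :=
      Matrix.mulVec_injective_iff_isUnit.mpr (Matrix.isUnit_iff_isUnit_det M |>.mpr hdet.isUnit)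
    apply hx
    have : M *ᵥ x = M *ᵥ 0 := by simpa using this
    exact hinj this

/-- square root of a posdef matrix, as a posdef matrix -/
lemma posDef_sqrt {X : Matrix m m ℂ} (hX : X.PosDef) : (CFC.sqrt X).PosDef := by
  apply posDef_of_posSemidef_det_ne_zero (CFC.sqrt_nonneg X).posSemidef
  intro h
  have h2 : CFC.sqrt X ^ 2 = X := CFC.sq_sqrt X hX.posSemidef.nonneg
  have : X.det = 0 := by
    rw [← h2, pow_two, det_mul, h, mul_zero]
  exact hX.det_pos.ne' this

/-- L1s: det X ≤ det (X + Δ) for X posdef, Δ psd; equality iff Δ = 0. -/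
lemma det_le_det_add_psd {X Δ : Matrix m m ℂ} (hX : X.PosDef) (hΔ : Δ.PosSemidef) :
    X.det ≤ (X + Δ).det ∧ ((X + Δ).det = X.det ↔ Δ = 0) := by
  set Q := CFC.sqrt X with hQdef
  have hQ : Q.PosDef := posDef_sqrt hX
  have hQH : Q.IsHermitian := hQ.isHermitian
  have hQunit : IsUnit Q := hQ.isUnit
  have hQinvH : (Q⁻¹).IsHermitian := hQH.inv
  have hQQ : Q * Q = X := CFC.sqrt_mul_sqrt_self X hX.posSemidef.nonneg
  set E := Q⁻¹ * Δ * Q⁻¹ with hEdef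
  have hE : E.PosSemidef := by
    have := hΔ.conjTranspose_mul_mul_same (Q⁻¹)
    rwa [hQinvH.eq] at this
  have hkey : X + Δ = Q * (1 + E) * Q := by
    rw [Matrix.mul_add, Matrix.add_mul, Matrix.mul_one, hQQ, hEdef]
    congr 1
    rw [← Matrix.mul_assoc, ← Matrix.mul_assoc, Matrix.mul_nonsing_inv _ (by
      simpa [Matrix.isUnit_iff_isUnit_det] using hQunit), Matrix.one_mul,
      Matrix.mul_assoc, Matrix.nonsing_inv_mul _ (by
      simpa [Matrix.isUnit_iff_isUnit_det] using hQunit), Matrix.mul_one]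
  have hdet : (X + Δ).det = X.det * (1 + E).det := by
    rw [hkey, det_mul, det_mul, ← hQQ, det_mul]; ring
  obtain ⟨hge, heq⟩ := det_one_add_psd hE
  have hXpos : (0:ℂ) < X.det := hX.det_pos
  constructor
  · calc X.det = X.det * 1 := (mul_one _).symm
    _ ≤ X.det * (1 + E).det := by
        rcases hge.lt_or_eq with h | h
        · exact le_of_lt (by
            apply mul_lt_mul_of_pos_left h hXpos)
        · rw [← h]
    _ = (X + Δ).det := hdet.symm
  · constructor
    · intro h
      rw [hdet] at h
      have h1 : (1 + E).det = 1 := by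
        have := mul_left_cancel₀ hXpos.ne' (by rw [h, mul_one] : X.det * (1+E).det = X.det * 1)
        exact this
      have hE0 : E = 0 := heq.mp h1
      -- Δ = Q * E * Q
      have : Δ = Q * E * Q := by
        rw [hEdef, ← Matrix.mul_assoc, ← Matrix.mul_assoc, Matrix.mul_nonsing_inv _ (by
          simpa [Matrix.isUnit_iff_isUnit_det] using hQunit), Matrix.one_mul,
          Matrix.mul_assoc, Matrix.nonsing_inv_mul _ (by
          simpa [Matrix.isUnit_iff_isUnit_det] using hQunit), Matrix.mul_one]
      rw [this, hE0, Matrix.mul_zero, Matrix.zero_mul]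
    · rintro rfl
      rw [add_zero]

lemma det_mul_det_one_add_inv {M : Matrix m m ℂ} (hM : M.PosDef) :
    (M + 1).det = M.det * (1 + M⁻¹).det := by
  have : M * (1 + M⁻¹) = M + 1 := by
    rw [Matrix.mul_add, Matrix.mul_one, Matrix.mul_nonsing_inv _ (by
      simpa [Matrix.isUnit_iff_isUnit_det] using hM.isUnit)]
  rw [← this, det_mul]

/-- inverse antitone along psd perturbation -/
lemma inv_sub_inv_psd {M E : Matrix m m ℂ} (hM : M.PosDef) (hE : E.PosSemidef) :
    (M⁻¹ - (M + E)⁻¹).PosSemidef := by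
  set N := M + E with hN
  have hNpos : N.PosDef := hM.add_posSemidef hE
  have hMdet : IsUnit M.det := (Matrix.isUnit_iff_isUnit_det M).mp hM.isUnit
  have hNdet : IsUnit N.det := (Matrix.isUnit_iff_isUnit_det N).mp hNpos.isUnit
  have hmid : N * M⁻¹ * N - N = E + E * M⁻¹ * E := by
    have h1 : N * M⁻¹ * N = M + E + E + E * M⁻¹ * E := by
      rw [hN, Matrix.add_mul, Matrix.mul_nonsing_inv _ hMdet, Matrix.add_mul, Matrix.one_mul,
        Matrix.mul_add, Matrix.mul_assoc E M⁻¹ M, Matrix.nonsing_inv_mul _ hMdet,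
        Matrix.mul_one]
      abel
    rw [h1, hN]
    abel
  have hS : (E + E * M⁻¹ * E).PosSemidef := by
    have h2 : (Eᴴ * M⁻¹ * E).PosSemidef := hM.inv.posSemidef.conjTranspose_mul_mul_same E
    rw [hE.isHermitian.eq] at h2
    exact hE.add h2
  have hfinal : M⁻¹ - N⁻¹ = N⁻¹ * (E + E * M⁻¹ * E) * N⁻¹ := by
    rw [← hmid, Matrix.mul_sub, Matrix.sub_mul]
    have e1 : N⁻¹ * (N * M⁻¹ * N) * N⁻¹ = M⁻¹ := by
      rw [← Matrix.mul_assoc, ← Matrix.mul_assoc, Matrix.nonsing_inv_mul _ hNdet, Matrix.one_mul,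
        Matrix.mul_assoc, Matrix.mul_nonsing_inv _ hNdet, Matrix.mul_one]
    have e2 : N⁻¹ * N * N⁻¹ = N⁻¹ := by
      rw [Matrix.nonsing_inv_mul _ hNdet, Matrix.one_mul]
    rw [e1, e2]
  rw [hfinal]
  have h3 := hS.conjTranspose_mul_mul_same (N⁻¹)
  rwa [hNpos.isHermitian.inv.eq] at h3

/-- L5: det ratio monotone: M.det * (M+E+1).det ≤ (M+E).det * (M+1).det -/
lemma det_ratio_mono {M E : Matrix m m ℂ} (hM : M.PosDef) (hE : E.PosSemidef) :
    M.det * (M + E + 1).det ≤ (M + E).det * (M + 1).det := by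
  set N := M + E with hN
  have hNpos : N.PosDef := hM.add_posSemidef hE
  have hMdet := det_mul_det_one_add_inv hM
  have hNdet := det_mul_det_one_add_inv hNpos
  have hdiff := inv_sub_inv_psd hM hE
  have hX : ((1 : Matrix m m ℂ) + N⁻¹).PosDef := Matrix.PosDef.one.add_posSemidef hNpos.inv.posSemidef
  have hsum : (1 + N⁻¹) + (M⁻¹ - N⁻¹) = 1 + M⁻¹ := by abel
  obtain ⟨hle, -⟩ := det_le_det_add_psd hX hdiff
  rw [hsum] at hle
  calc M.det * (N + 1).det = M.det * N.det * (1 + N⁻¹).det := by rw [hNdet]; ring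
  _ ≤ M.det * N.det * (1 + M⁻¹).det := by
      apply mul_le_mul_of_nonneg_left hle
      exact le_of_lt (mul_pos hM.det_pos hNpos.det_pos)
  _ = N.det * (M + 1).det := by rw [hMdet]; ring

/-- conjugation of posdef by an invertible matrix -/
lemma posDef_conj {X : Matrix m m ℂ} (hX : X.PosDef) (C : Matrix m l ℂ)
    (hC : Function.Injective (C.mulVec)) : (Cᴴ * X * C).PosDef := by
  refine Matrix.PosDef.of_dotProduct_mulVec_pos ?_ ?_
  · exact Matrix.isHermitian_conjTranspose_mul_mul C hX.1
  · intro x hx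
    have hCx : C *ᵥ x ≠ 0 := fun h => hx (hC (by simpa using h))
    simpa only [Matrix.star_mulVec, Matrix.dotProduct_mulVec, Matrix.vecMul_vecMul] using
      hX.dotProduct_mulVec_pos hCx

/-- quadratic-form from psd conjugation: Bᴴ G B = 0 with G posdef forces B = 0 -/
lemma eq_zero_of_conj_eq_zero {G : Matrix m m ℂ} (hG : G.PosDef) {B : Matrix m l ℂ}
    (h : Bᴴ * G * B = 0) : B = 0 := by
  have hvec : ∀ x : l → ℂ, B *ᵥ x = 0 := by
    intro x
    by_contra hx
    have := hG.dotProduct_mulVec_pos hx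
    have h0 : star x ⬝ᵥ (Bᴴ * G * B) *ᵥ x = star (B *ᵥ x) ⬝ᵥ G *ᵥ (B *ᵥ x) := by
      simp only [Matrix.star_mulVec, Matrix.dotProduct_mulVec, Matrix.vecMul_vecMul]
    rw [h] at h0
    simp only [Matrix.zero_mulVec, dotProduct_zero] at h0
    rw [← h0] at this
    exact lt_irrefl _ this
  ext i j
  have := congrFun (hvec (Pi.single j 1)) i
  simpa [Matrix.mulVec_single] using this

lemma inv_sub_inv_one_posDef {M : Matrix m m ℂ} (hM : M.PosDef) :
    (M⁻¹ - (M + 1)⁻¹).PosDef := by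
  set N := M + 1 with hN
  have hNpos : N.PosDef := hM.add_posSemidef Matrix.PosSemidef.one
  have hMdet : IsUnit M.det := (Matrix.isUnit_iff_isUnit_det M).mp hM.isUnit
  have hNdet : IsUnit N.det := (Matrix.isUnit_iff_isUnit_det N).mp hNpos.isUnit
  have hmid : N * M⁻¹ * N - N = 1 + M⁻¹ := by
    have h1 : N * M⁻¹ * N = M + 1 + 1 + M⁻¹ := by
      rw [hN, Matrix.add_mul M 1 M⁻¹, Matrix.mul_nonsing_inv _ hMdet, Matrix.one_mul,
        Matrix.add_mul, Matrix.one_mul, Matrix.mul_add, Matrix.nonsing_inv_mul _ hMdet,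
        Matrix.mul_one]
      abel
    rw [h1, hN]
    abel
  have hfinal : M⁻¹ - N⁻¹ = N⁻¹ * (1 + M⁻¹) * N⁻¹ := by
    rw [← hmid, Matrix.mul_sub, Matrix.sub_mul]
    have e1 : N⁻¹ * (N * M⁻¹ * N) * N⁻¹ = M⁻¹ := by
      rw [← Matrix.mul_assoc, ← Matrix.mul_assoc, Matrix.nonsing_inv_mul _ hNdet, Matrix.one_mul,
        Matrix.mul_assoc, Matrix.mul_nonsing_inv _ hNdet, Matrix.mul_one]
    have e2 : N⁻¹ * N * N⁻¹ = N⁻¹ := by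
      rw [Matrix.nonsing_inv_mul _ hNdet, Matrix.one_mul]
    rw [e1, e2]
  rw [hfinal]
  have hmidpos : ((1 : Matrix m m ℂ) + M⁻¹).PosDef := Matrix.PosDef.one.add_posSemidef hM.inv.posSemidef
  have hinj : Function.Injective ((N⁻¹).mulVec) :=
    Matrix.mulVec_injective_iff_isUnit.mpr (Matrix.isUnit_nonsing_inv_iff.mpr hNpos.isUnit)
  have := posDef_conj hmidpos (N⁻¹) hinj
  rwa [hNpos.isHermitian.inv.eq] at this

lemma posDef_toBlocks₁₁ {M : Matrix (m ⊕ l) (m ⊕ l) ℂ} (hM : M.PosDef) :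
    M.toBlocks₁₁.PosDef := by
  refine Matrix.PosDef.of_dotProduct_mulVec_pos ?_ ?_
  · ext i j
    simpa [Matrix.toBlocks₁₁, Matrix.conjTranspose_apply] using
      congrFun (congrFun hM.isHermitian.eq (Sum.inl i)) (Sum.inl j)
  · intro x hx
    have hz : (Sum.elim x 0 : m ⊕ l → ℂ) ≠ 0 := by
      intro h
      exact hx (funext fun i => congrFun h (Sum.inl i))
    have := hM.dotProduct_mulVec_pos hz
    convert this using 1
    simp [dotProduct, Matrix.mulVec, Fintype.sum_sum_type, Matrix.toBlocks₁₁,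
      dotProduct]

lemma posDef_toBlocks₂₂ {M : Matrix (m ⊕ l) (m ⊕ l) ℂ} (hM : M.PosDef) :
    M.toBlocks₂₂.PosDef := by
  refine Matrix.PosDef.of_dotProduct_mulVec_pos ?_ ?_
  · ext i j
    simpa [Matrix.toBlocks₂₂, Matrix.conjTranspose_apply] using
      congrFun (congrFun hM.isHermitian.eq (Sum.inr i)) (Sum.inr j)
  · intro x hx
    have hz : (Sum.elim 0 x : m ⊕ l → ℂ) ≠ 0 := by
      intro h
      exact hx (funext fun i => congrFun h (Sum.inr i))
    have := hM.dotProduct_mulVec_pos hz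
    convert this using 1
    simp [dotProduct, Matrix.mulVec, Fintype.sum_sum_type, Matrix.toBlocks₂₂,
      dotProduct]

lemma posDef_fromBlocks_diag {P : Matrix m m ℂ} {Q : Matrix l l ℂ}
    (hP : P.PosDef) (hQ : Q.PosDef) : (Matrix.fromBlocks P 0 0 Q).PosDef := by
  refine Matrix.PosDef.of_dotProduct_mulVec_pos ?_ ?_
  · ext i j
    cases i <;> cases j <;> simp [Matrix.conjTranspose_apply, Matrix.fromBlocks]
    · exact congrFun (congrFun hP.isHermitian.eq _) _
    · exact congrFun (congrFun hQ.isHermitian.eq _) _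
  · intro x hx
    have hq : star x ⬝ᵥ (Matrix.fromBlocks P 0 0 Q) *ᵥ x
        = star (x ∘ Sum.inl) ⬝ᵥ P *ᵥ (x ∘ Sum.inl) + star (x ∘ Sum.inr) ⬝ᵥ Q *ᵥ (x ∘ Sum.inr) := by
      simp [dotProduct, Matrix.mulVec, Fintype.sum_sum_type, Matrix.fromBlocks]
    rw [hq]
    have : x ∘ Sum.inl ≠ 0 ∨ x ∘ Sum.inr ≠ 0 := by
      by_contra h
      push_neg at h
      apply hx
      funext i
      cases i
      · exact congrFun h.1 _
      · exact congrFun h.2 _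
    rcases this with h | h
    · exact lt_of_lt_of_le (lt_of_lt_of_le (hP.dotProduct_mulVec_pos h) (le_add_of_nonneg_right (hQ.posSemidef.dotProduct_mulVec_nonneg _)))
        le_rfl
    · exact lt_of_lt_of_le (lt_of_lt_of_le (hQ.dotProduct_mulVec_pos h) (le_add_of_nonneg_left (hP.posSemidef.dotProduct_mulVec_nonneg _)))
        le_rfl

lemma posDef_submatrix_equiv {α β : Type*} [Fintype α] [Fintype β] [DecidableEq α] [DecidableEq β]
    {M : Matrix α α ℂ} (hM : M.PosDef) (e : β ≃ α) : (M.submatrix e e).PosDef := by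
  refine Matrix.PosDef.of_dotProduct_mulVec_pos ?_ ?_
  · ext i j
    simpa [Matrix.conjTranspose_apply] using
      congrFun (congrFun hM.isHermitian.eq (e i)) (e j)
  · intro x hx
    have hz : (x ∘ e.symm) ≠ 0 := by
      intro h
      apply hx
      funext i
      simpa using congrFun h (e i)
    have := hM.dotProduct_mulVec_pos hz
    convert this using 1
    rw [Matrix.submatrix_mulVec_equiv]
    simp only [dotProduct]
    apply Fintype.sum_equiv e
    intro i
    simp

set_option maxHeartbeats 1000000 in
/-- two-block core -/
lemma step1 {P : Matrix m m ℂ} {B : Matrix m l ℂ} {D : Matrix l l ℂ}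
    (hblk : (Matrix.fromBlocks P B Bᴴ D).PosDef) :
    (D - Bᴴ * P⁻¹ * B).PosDef ∧ (D + 1 - Bᴴ * (P + 1)⁻¹ * B).PosDef ∧
    ((D - Bᴴ * P⁻¹ * B).det * (D + 1).det ≤ D.det * (D + 1 - Bᴴ * (P + 1)⁻¹ * B).det) ∧
    ((D - Bᴴ * P⁻¹ * B).det * (D + 1).det = D.det * (D + 1 - Bᴴ * (P + 1)⁻¹ * B).det ↔ B = 0) := by
  have hP : P.PosDef := by simpa [Matrix.toBlocks_fromBlocks₁₁] using posDef_toBlocks₁₁ hblk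
  have hD : D.PosDef := by simpa [Matrix.toBlocks_fromBlocks₂₂] using posDef_toBlocks₂₂ hblk
  haveI : Invertible P := hP.isUnit.invertible
  have hP1 : (P + 1).PosDef := hP.add_posSemidef Matrix.PosSemidef.one
  haveI : Invertible (P + 1) := hP1.isUnit.invertible
  set S : Matrix l l ℂ := Bᴴ * P⁻¹ * B with hSdef
  set T : Matrix l l ℂ := Bᴴ * (P + 1)⁻¹ * B with hTdef
  set M : Matrix l l ℂ := D - S with hMdef
  -- blk + 1 is posdef and equals fromBlocks (P+1) B Bᴴ (D+1)
  have hblk1eq : Matrix.fromBlocks P B Bᴴ D + 1 = Matrix.fromBlocks (P+1) B Bᴴ (D+1) := by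
    rw [← Matrix.fromBlocks_one, Matrix.fromBlocks_add, add_zero, add_zero]
  have hblk1 : (Matrix.fromBlocks (P+1) B Bᴴ (D+1)).PosDef := by
    rw [← hblk1eq]; exact hblk.add_posSemidef Matrix.PosSemidef.one
  -- Schur complements psd
  have hMpsd : M.PosSemidef :=
    (Matrix.PosDef.fromBlocks₁₁ B D hP).mp hblk.posSemidef
  have hTpsd : (D + 1 - T).PosSemidef :=
    (Matrix.PosDef.fromBlocks₁₁ B (D+1) hP1).mp hblk1.posSemidef
  -- dets
  have hdet : (Matrix.fromBlocks P B Bᴴ D).det = P.det * M.det := by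
    rw [Matrix.det_fromBlocks₁₁, Matrix.invOf_eq_nonsing_inv]
  have hdet1 : (Matrix.fromBlocks (P+1) B Bᴴ (D+1)).det = (P+1).det * (D + 1 - T).det := by
    rw [Matrix.det_fromBlocks₁₁, Matrix.invOf_eq_nonsing_inv]
  have hMposd : M.PosDef := by
    apply posDef_of_posSemidef_det_ne_zero hMpsd
    intro h
    rw [h, mul_zero] at hdet
    exact hblk.det_pos.ne' hdet
  have hTposd : (D + 1 - T).PosDef := by
    apply posDef_of_posSemidef_det_ne_zero hTpsd
    intro h
    rw [h, mul_zero] at hdet1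
    exact hblk1.det_pos.ne' hdet1
  refine ⟨hMposd, hTposd, ?_⟩
  -- S - T is Bᴴ G B with G = P⁻¹ - (P+1)⁻¹ posdef
  have hG : (P⁻¹ - (P + 1)⁻¹).PosDef := inv_sub_inv_one_posDef hP
  have hST : S - T = Bᴴ * (P⁻¹ - (P + 1)⁻¹) * B := by
    rw [hSdef, hTdef, Matrix.mul_sub, Matrix.sub_mul]
  have hSTpsd : (S - T).PosSemidef := by
    rw [hST]; exact hG.posSemidef.conjTranspose_mul_mul_same B
  -- decomposition: D + 1 - T = (M + 1) + (S - T)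
  have hdecomp : D + 1 - T = (M + 1) + (S - T) := by rw [hMdef]; abel
  have hM1 : (M + 1).PosDef := hMposd.add_posSemidef Matrix.PosSemidef.one
  obtain ⟨hle1, heq1⟩ := det_le_det_add_psd hM1 hSTpsd
  rw [← hdecomp] at hle1 heq1
  -- S psd
  have hSpsd : S.PosSemidef := by
    rw [hSdef]; exact hP.inv.posSemidef.conjTranspose_mul_mul_same B
  -- det_ratio_mono with M, S : M.det * (M + S + 1).det ≤ (M + S).det * (M + 1).det
  have hratio := det_ratio_mono hMposd hSpsd
  have hMS : M + S = D := by rw [hMdef]; abel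
  rw [hMS] at hratio
  have hDpos : (0:ℂ) < D.det := hD.det_pos
  have hchain : M.det * (D + 1).det ≤ D.det * (M + 1).det := hratio
  have hfin : D.det * (M + 1).det ≤ D.det * (D + 1 - T).det :=
    mul_le_mul_of_nonneg_left hle1 hDpos.le
  constructor
  · exact le_trans hchain hfin
  constructor
  · intro heq
    -- forces (M+1).det = (D+1-T).det hence S - T = 0 hence B = 0
    have h1 : D.det * (M + 1).det = D.det * (D + 1 - T).det := le_antisymm hfin (by
      calc D.det * (D + 1 - T).det = M.det * (D + 1).det := heq.symm
      _ ≤ D.det * (M + 1).det := hchain)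
    have h2 : (D + 1 - T).det = (M + 1).det :=
      (mul_left_cancel₀ hDpos.ne' h1).symm
    have h3 : S - T = 0 := heq1.mp h2
    rw [hST] at h3
    exact eq_zero_of_conj_eq_zero hG h3
  · rintro rfl
    simp [hSdef, hTdef, hMdef]


def sigmaSuccEquiv (k : ℕ) (n : Fin (k + 1) → ℕ) :
    (Fin (n 0) ⊕ ((i : Fin k) × Fin (n i.succ))) ≃ ((i : Fin (k + 1)) × Fin (n i)) where
  toFun := Sum.elim (fun a => ⟨0, a⟩) (fun p => ⟨p.1.succ, p.2⟩)
  invFun := fun p => Fin.cases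
    (motive := fun i => Fin (n i) → (Fin (n 0) ⊕ ((i : Fin k) × Fin (n i.succ))))
    (fun a => Sum.inl a) (fun i a => Sum.inr ⟨i, a⟩) p.1 p.2
  left_inv := by rintro (a | ⟨i, a⟩) <;> simp
  right_inv := by
    rintro ⟨i, a⟩
    revert a
    refine Fin.cases ?_ ?_ i
    · intro a; simp
    · intro i a; simp

lemma pinch_eq_iff_isBlockDiagonal {k : ℕ} {n : Fin k → ℕ}
    {A : Matrix ((i : Fin k) × Fin (n i)) ((i : Fin k) × Fin (n i)) ℂ} :
    pinch A = A ↔ IsBlockDiagonal A := by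
  constructor
  · intro h p q hpq
    rw [← h]
    simp [pinch, hpq]
  · intro h
    funext p q
    by_cases hpq : p.1 = q.1
    · simp [pinch, hpq]
    · simp [pinch, hpq, h p q hpq]

lemma le_of_mul_le_mul_right_cpos {a b c : ℂ} (h : a * c ≤ b * c) (hc : 0 < c) : a ≤ b := by
  obtain ⟨hcre, hcim⟩ := Complex.lt_def.mp hc
  simp only [Complex.zero_re] at hcre
  obtain ⟨hre, him⟩ := Complex.le_def.mp h
  rw [Complex.le_def]
  simp only [Complex.mul_re, Complex.mul_im, ← hcim, Complex.zero_im, mul_zero, zero_mul, sub_zero, add_zero, zero_add]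
    at hre him
  constructor
  · exact le_of_mul_le_mul_right hre hcre
  · exact mul_right_cancel₀ hcre.ne' him

lemma keyAux : ∀ (k : ℕ) (n : Fin k → ℕ)
    (A : Matrix ((i : Fin k) × Fin (n i)) ((i : Fin k) × Fin (n i)) ℂ), A.PosDef →
    (pinch A).PosDef ∧
    ((pinch A + 1).det * A.det ≤ (A + 1).det * (pinch A).det) ∧
    (((pinch A + 1).det * A.det = (A + 1).det * (pinch A).det) ↔ pinch A = A) := by
  intro k
  induction k with
  | zero =>
    intro n A hA
    have hempty : IsEmpty ((i : Fin 0) × Fin (n i)) := ⟨fun p => p.1.elim0⟩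
    have hpa : pinch A = A := Subsingleton.elim _ _
    rw [hpa]
    exact ⟨hA, le_refl _, ⟨fun _ => rfl, fun _ => rfl⟩⟩
  | succ k ih =>
    intro n A hA
    set e := sigmaSuccEquiv k n with he
    set A' := A.submatrix e e with hA'def
    have hA' : A'.PosDef := posDef_submatrix_equiv hA e
    set P := A'.toBlocks₁₁ with hPdef
    set B := A'.toBlocks₁₂ with hBdef
    set D := A'.toBlocks₂₂ with hDdef
    have hblkeq : A' = Matrix.fromBlocks P B Bᴴ D := by
      rw [hPdef, hBdef, hDdef]
      have h21 : A'.toBlocks₂₁ = (A'.toBlocks₁₂)ᴴ := by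
        ext i j
        simpa [Matrix.toBlocks₂₁, Matrix.toBlocks₁₂, Matrix.conjTranspose_apply] using
          (congrFun (congrFun hA'.isHermitian.eq (Sum.inr i)) (Sum.inl j)).symm
      rw [← h21, Matrix.fromBlocks_toBlocks]
    have hblk : (Matrix.fromBlocks P B Bᴴ D).PosDef := hblkeq ▸ hA'
    have hP : P.PosDef := posDef_toBlocks₁₁ hA'
    have hD : D.PosDef := posDef_toBlocks₂₂ hA'
    obtain ⟨hΦD, hle2, hiff2⟩ := ih (fun i => n i.succ) D hD
    -- pinch submatrix identity
    have hpinchsub : (pinch A).submatrix e e = Matrix.fromBlocks P 0 0 (pinch D) := by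
      funext p q
      cases p with
      | inl a =>
        cases q with
        | inl b =>
          simp only [Matrix.submatrix_apply, he]
          show pinch A ⟨0, a⟩ ⟨0, b⟩ = P a b
          simp [pinch, hPdef, Matrix.toBlocks₁₁, hA'def, he, sigmaSuccEquiv]
        | inr qb =>
          simp only [Matrix.submatrix_apply, he]
          show pinch A ⟨0, a⟩ ⟨qb.1.succ, qb.2⟩ = 0
          simp [pinch, (Fin.succ_ne_zero qb.1).symm]
      | inr pb =>
        cases q with
        | inl b =>
          simp only [Matrix.submatrix_apply, he]
          show pinch A ⟨pb.1.succ, pb.2⟩ ⟨0, b⟩ = 0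
          simp [pinch, Fin.succ_ne_zero pb.1]
        | inr qb =>
          simp only [Matrix.submatrix_apply, he]
          show pinch A ⟨pb.1.succ, pb.2⟩ ⟨qb.1.succ, qb.2⟩ = pinch D pb qb
          by_cases hij : pb.1 = qb.1
          · rcases pb with ⟨i, a⟩
            rcases qb with ⟨j, b⟩
            simp only at hij
            subst hij
            simp [pinch, hDdef, Matrix.toBlocks₂₂, hA'def, he, sigmaSuccEquiv]
          · have : pb.1.succ ≠ qb.1.succ := fun h => hij (Fin.succ_inj.mp h)
            simp [pinch, hij, this]
    have hpinchA : pinch A = (Matrix.fromBlocks P 0 0 (pinch D)).submatrix e.symm e.symm := by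
      rw [← hpinchsub]
      rw [Matrix.submatrix_submatrix]
      simp
    have hΦA : (pinch A).PosDef := by
      rw [hpinchA]
      exact posDef_submatrix_equiv (posDef_fromBlocks_diag hP hΦD) e.symm
    haveI : Invertible P := hP.isUnit.invertible
    have hP1 : (P + 1).PosDef := hP.add_posSemidef Matrix.PosSemidef.one
    haveI : Invertible (P + 1) := hP1.isUnit.invertible
    have hD1 : (D + 1).PosDef := hD.add_posSemidef Matrix.PosSemidef.one
    have hΦD1 : (pinch D + 1).PosDef := hΦD.add_posSemidef Matrix.PosSemidef.one
    obtain ⟨hM, hT, hle1, hiff1⟩ := step1 hblk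
    -- determinant formulas
    have hdetA : A.det = P.det * (D - Bᴴ * P⁻¹ * B).det := by
      rw [← Matrix.det_submatrix_equiv_self e A, ← hA'def, hblkeq, Matrix.det_fromBlocks₁₁,
        Matrix.invOf_eq_nonsing_inv]
    have hsub1 : (A + 1).submatrix e e = Matrix.fromBlocks (P + 1) B Bᴴ (D + 1) := by
      have : (A + 1).submatrix e e = A' + 1 := by
        rw [hA'def]
        funext p q
        cases p <;> cases q <;>
          simp [Matrix.submatrix_apply, Matrix.one_apply, Equiv.apply_eq_iff_eq]
      rw [this, hblkeq, ← Matrix.fromBlocks_one, Matrix.fromBlocks_add, add_zero, add_zero]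
    have hdetA1 : (A + 1).det = (P + 1).det * (D + 1 - Bᴴ * (P + 1)⁻¹ * B).det := by
      rw [← Matrix.det_submatrix_equiv_self e (A + 1), hsub1, Matrix.det_fromBlocks₁₁,
        Matrix.invOf_eq_nonsing_inv]
    have hdetΦ : (pinch A).det = P.det * (pinch D).det := by
      rw [← Matrix.det_submatrix_equiv_self e (pinch A), hpinchsub,
        Matrix.det_fromBlocks_zero₂₁]
    have hdetΦ1 : (pinch A + 1).det = (P + 1).det * (pinch D + 1).det := by
      have h1 : (pinch A + 1).submatrix e e = Matrix.fromBlocks (P + 1) 0 0 (pinch D + 1) := by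
        have : (pinch A + 1).submatrix e e = (pinch A).submatrix e e + 1 := by
          funext p q
          cases p <;> cases q <;>
            simp [Matrix.submatrix_apply, Matrix.one_apply, Equiv.apply_eq_iff_eq]
        rw [this, hpinchsub, ← Matrix.fromBlocks_one, Matrix.fromBlocks_add, add_zero, add_zero]
      rw [← Matrix.det_submatrix_equiv_self e (pinch A + 1), h1, Matrix.det_fromBlocks_zero₂₁]
    -- positivity of all determinants
    have hdPpos := hP.det_pos
    have hdP1pos := hP1.det_pos
    have hdpos := hD.det_pos
    have hd1pos := hD1.det_pos
    have hfpos := hΦD.det_pos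
    have hf1pos := hΦD1.det_pos
    have hspos := hM.det_pos
    have htpos := hT.det_pos
    set s := (D - Bᴴ * P⁻¹ * B).det
    set t := (D + 1 - Bᴴ * (P + 1)⁻¹ * B).det
    set d := D.det
    set d1 := (D + 1).det
    set f := (pinch D).det
    set f1 := (pinch D + 1).det
    have hcore : f1 * s ≤ t * f := by
      have h := mul_le_mul hle2 hle1 (mul_pos hspos hd1pos).le (mul_pos hd1pos hfpos).le
      have h' : f1 * s * (d * d1) ≤ t * f * (d * d1) := by
        calc f1 * s * (d * d1) = f1 * d * (s * d1) := by ring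
        _ ≤ d1 * f * (d * t) := h
        _ = t * f * (d * d1) := by ring
      exact le_of_mul_le_mul_right_cpos h' (mul_pos hdpos hd1pos)
    refine ⟨hΦA, ?_, ?_⟩
    · rw [hdetA, hdetA1, hdetΦ, hdetΦ1]
      calc (P + 1).det * f1 * (P.det * s) = P.det * (P + 1).det * (f1 * s) := by ring
      _ ≤ P.det * (P + 1).det * (t * f) :=
        mul_le_mul_of_nonneg_left hcore (mul_pos hdPpos hdP1pos).le
      _ = (P + 1).det * t * (P.det * f) := by ring
    · constructor
      · intro heq
        rw [hdetA, hdetA1, hdetΦ, hdetΦ1] at heq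
        have h1 : f1 * s = t * f := by
          apply mul_left_cancel₀ (mul_pos hdPpos hdP1pos).ne'
          calc P.det * (P + 1).det * (f1 * s) = (P + 1).det * f1 * (P.det * s) := by ring
          _ = (P + 1).det * t * (P.det * f) := heq
          _ = P.det * (P + 1).det * (t * f) := by ring
        have hprodeq : f1 * d * (s * d1) = d1 * f * (d * t) := by
          calc f1 * d * (s * d1) = f1 * s * (d * d1) := by ring
          _ = t * f * (d * d1) := by rw [h1]
          _ = d1 * f * (d * t) := by ring
        have h2 : f1 * d * (s * d1) ≤ d1 * f * (s * d1) :=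
          mul_le_mul_of_nonneg_right hle2 (mul_pos hspos hd1pos).le
        have h3 : d1 * f * (s * d1) ≤ d1 * f * (d * t) :=
          mul_le_mul_of_nonneg_left hle1 (mul_pos hd1pos hfpos).le
        have h3' : d1 * f * (s * d1) ≤ f1 * d * (s * d1) := by
          rw [hprodeq]; exact h3
        have hab : f1 * d = d1 * f :=
          mul_right_cancel₀ (mul_pos hspos hd1pos).ne' (le_antisymm h2 h3')
        have hcg : s * d1 = d * t := by
          apply mul_left_cancel₀ (mul_pos hd1pos hfpos).ne'
          rw [← hprodeq, hab]
        have hB0 : B = 0 := hiff1.mp hcg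
        have hΦDeq : pinch D = D := hiff2.mp hab
        have hfb : Matrix.fromBlocks P 0 0 (pinch D) = Matrix.fromBlocks P B Bᴴ D := by
          rw [hB0, hΦDeq]
          simp
        rw [hpinchA, hfb, ← hblkeq, hA'def, Matrix.submatrix_submatrix]
        simp
      · intro hpA
        have hsub : Matrix.fromBlocks P 0 0 (pinch D) = Matrix.fromBlocks P B Bᴴ D := by
          rw [← hpinchsub, hpA, ← hblkeq, hA'def]
        have hB0 : B = 0 := by
          have := congrArg Matrix.toBlocks₁₂ hsub
          simpa [Matrix.toBlocks_fromBlocks₁₂] using this.symm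
        have hΦDeq : pinch D = D := by
          have := congrArg Matrix.toBlocks₂₂ hsub
          simpa [Matrix.toBlocks_fromBlocks₂₂] using this
        have e1 : s * d1 = d * t := hiff1.mpr hB0
        have e2 : f1 * d = d1 * f := hiff2.mpr hΦDeq
        rw [hdetA, hdetA1, hdetΦ, hdetΦ1]
        have h1 : f1 * s = t * f := by
          apply mul_right_cancel₀ (mul_pos hdpos hd1pos).ne'
          calc f1 * s * (d * d1) = f1 * d * (s * d1) := by ring
          _ = d1 * f * (d * t) := by rw [e1, e2]
          _ = t * f * (d * d1) := by ring
        calc (P + 1).det * f1 * (P.det * s) = P.det * (P + 1).det * (f1 * s) := by ring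
        _ = P.det * (P + 1).det * (t * f) := by rw [h1]
        _ = (P + 1).det * t * (P.det * f) := by ring


end AuxPinch

/-- For a positive definite matrix `A` in the block setting, `Φ(A)` is positive
definite, `I + Φ(A)⁻¹` and `I + A⁻¹` are positive definite, and
`det (I + Φ(A)⁻¹) ≤ det (I + A⁻¹)` (both determinants being positive reals, compared in
the standard partial order on `ℂ`), with equality iff `A` is block diagonal
(equivalently `Φ(A) = A`). -/
theorem det_one_add_pinch_inv_le {k : ℕ} {n : Fin k → ℕ} (hn : ∀ i, 0 < n i)
    {A : Matrix ((i : Fin k) × Fin (n i)) ((i : Fin k) × Fin (n i)) ℂ}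
    (hA : A.PosDef) :
    (pinch A).PosDef ∧ (1 + (pinch A)⁻¹).PosDef ∧ (1 + A⁻¹).PosDef ∧
      (1 + (pinch A)⁻¹).det ≤ (1 + A⁻¹).det ∧
      ((1 + (pinch A)⁻¹).det = (1 + A⁻¹).det ↔ IsBlockDiagonal A) := by
  obtain ⟨hΦ, hle, hiff⟩ := keyAux k n A hA
  have h1Φ : (1 + (pinch A)⁻¹).PosDef := Matrix.PosDef.one.add_posSemidef hΦ.inv.posSemidef
  have h1A : (1 + A⁻¹).PosDef := Matrix.PosDef.one.add_posSemidef hA.inv.posSemidef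
  have hdΦ := det_mul_det_one_add_inv hΦ
  have hdA := det_mul_det_one_add_inv hA
  have hpos := mul_pos hΦ.det_pos hA.det_pos
  refine ⟨hΦ, h1Φ, h1A, ?_, ?_⟩
  · apply le_of_mul_le_mul_right_cpos _ hpos
    calc (1 + (pinch A)⁻¹).det * ((pinch A).det * A.det) = (pinch A + 1).det * A.det := by
          rw [hdΦ]; ring
    _ ≤ (A + 1).det * (pinch A).det := hle
    _ = (1 + A⁻¹).det * ((pinch A).det * A.det) := by rw [hdA]; ring
  · rw [← pinch_eq_iff_isBlockDiagonal, ← hiff]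
    constructor
    · intro h
      rw [hdΦ, hdA, h]
      ring
    · intro h
      apply mul_right_cancel₀ hpos.ne'
      calc (1 + (pinch A)⁻¹).det * ((pinch A).det * A.det) = (pinch A + 1).det * A.det := by
            rw [hdΦ]; ring
      _ = (A + 1).det * (pinch A).det := h
      _ = (1 + A⁻¹).det * ((pinch A).det * A.det) := by rw [hdA]; ring
end

section
/- Let Φ : M_n(ℂ) → M_n(ℂ) be a unital positive linear map, i.e. Φ is linear, Φ(I) = I, and Φ maps positive semidefinite matrices to positive semidefinite matrices. Let f be a continuous convex real-valued function on a real interval [a, b], and let A be a Hermitian n×n matrix with spectrum contained in [a, b]. Then Φ(A) is Hermitian with spectrum contained in [a, b], and trace(f(Φ(A))) ≤ trace(Φ(f(A))) (both traces are real numbers), where f is applied via the matrix functional calculus. -/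
open Matrix
open scoped ComplexOrder

variable {n : ℕ}

/-- diagonal entries of a PSD matrix are nonneg. -/
lemma psd_diag_nonneg {M : Matrix (Fin n) (Fin n) ℂ} (hM : M.PosSemidef) (i : Fin n) :
    0 ≤ M i i := by
  exact hM.diag_nonneg

lemma conj_diag_sum (U : Matrix (Fin n) (Fin n) ℂ) (d : Fin n → ℂ) :
    U * diagonal d * star U = ∑ j, d j • (U * Matrix.single j j 1 * star U) := by
  have h : diagonal d = ∑ j, d j • Matrix.single j j (1 : ℂ) := by
    ext i k
    rcases eq_or_ne i k with h | h
    · subst h; simp [diagonal_apply, Matrix.sum_apply, Matrix.single, Finset.sum_ite_eq']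
    · simp only [diagonal_apply, Matrix.sum_apply, Matrix.smul_apply, Matrix.single, of_apply,
        smul_ite, smul_zero, smul_eq_mul, mul_one, if_neg h]
      rw [Finset.sum_eq_zero]
      intro x _
      rcases eq_or_ne x i with rfl | hx
      · simp [h]
      · simp [hx]
  rw [h]
  simp only [Finset.mul_sum, Finset.sum_mul, mul_smul_comm, smul_mul_assoc]

lemma cfc_decomp {B : Matrix (Fin n) (Fin n) ℂ} (hB : B.IsHermitian) (g : ℝ → ℝ) :
    hB.cfc g = ∑ j, (g (hB.eigenvalues j) : ℂ) •
      ((hB.eigenvectorUnitary : Matrix (Fin n) (Fin n) ℂ) * Matrix.single j j 1 *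
        star (hB.eigenvectorUnitary : Matrix (Fin n) (Fin n) ℂ)) := by
  rw [Matrix.IsHermitian.cfc, Unitary.conjStarAlgAut_apply, conj_diag_sum]
  rfl

lemma spec_decomp {B : Matrix (Fin n) (Fin n) ℂ} (hB : B.IsHermitian) :
    B = ∑ j, (hB.eigenvalues j : ℂ) •
      ((hB.eigenvectorUnitary : Matrix (Fin n) (Fin n) ℂ) * Matrix.single j j 1 *
        star (hB.eigenvectorUnitary : Matrix (Fin n) (Fin n) ℂ)) := by
  conv_lhs => rw [hB.spectral_theorem]
  rw [Unitary.conjStarAlgAut_apply, conj_diag_sum]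
  rfl

lemma stdBasis_psd (j : Fin n) : (Matrix.single j j (1 : ℂ)).PosSemidef := by
  have h : Matrix.single j j (1 : ℂ) = diagonal (Pi.single j 1) := by
    ext i k
    rcases eq_or_ne i k with rfl | h
    · simp [Matrix.single, diagonal_apply, Pi.single_apply, eq_comm]
    · simp only [Matrix.single, of_apply, diagonal_apply, if_neg h]
      rw [if_neg]
      rintro ⟨rfl, rfl⟩; exact h rfl
  rw [h]
  exact PosSemidef.diagonal (fun i => by by_cases h : i = j <;> simp [Pi.single_apply, h])

lemma stdBasis_sum : ∑ j, Matrix.single j j (1 : ℂ) = (1 : Matrix (Fin n) (Fin n) ℂ) := by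
  ext i k
  rcases eq_or_ne i k with rfl | h
  · simp [Matrix.sum_apply, Matrix.single, one_apply, Finset.sum_ite_eq']
  · simp only [Matrix.sum_apply, Matrix.single, of_apply, one_apply, if_neg h]
    rw [Finset.sum_eq_zero]
    intro x _
    rcases eq_or_ne x i with rfl | hx
    · simp [h]
    · simp [hx]

open scoped ComplexOrder
/-- **Jensen's trace inequality for unital positive maps.** Let `Φ` be a unital positive
linear map on `n × n` complex matrices, `f` continuous and convex on `[a, b]`, and `A`
Hermitian with spectrum (i.e. all eigenvalues) contained in `[a, b]`.  Then `Φ A` is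
Hermitian with spectrum contained in `[a, b]` and
`trace (f (Φ A)) ≤ trace (Φ (f A))`, both traces being real numbers; here `f` is applied
via the matrix functional calculus. -/
theorem trace_cfc_jensen_unital_positive {n : ℕ}
    (Φ : Matrix (Fin n) (Fin n) ℂ →ₗ[ℂ] Matrix (Fin n) (Fin n) ℂ)
    (hΦ_unital : Φ 1 = 1)
    (hΦ_pos : ∀ X : Matrix (Fin n) (Fin n) ℂ, X.PosSemidef → (Φ X).PosSemidef)
    {a b : ℝ} (f : ℝ → ℝ) (hf_cont : ContinuousOn f (Set.Icc a b))
    (hf_conv : ConvexOn ℝ (Set.Icc a b) f)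
    {A : Matrix (Fin n) (Fin n) ℂ} (hA : A.IsHermitian)
    (hspec : ∀ i, hA.eigenvalues i ∈ Set.Icc a b) :
    ∃ hΦA : (Φ A).IsHermitian,
      (∀ i, hΦA.eigenvalues i ∈ Set.Icc a b) ∧
      ((hΦA.cfc f).trace).im = 0 ∧ ((Φ (hA.cfc f)).trace).im = 0 ∧
      ((hΦA.cfc f).trace).re ≤ ((Φ (hA.cfc f)).trace).re := by
  classical
  set lam := hA.eigenvalues with hlam
  set P : Fin n → Matrix (Fin n) (Fin n) ℂ := fun j =>
    (hA.eigenvectorUnitary : Matrix (Fin n) (Fin n) ℂ) * Matrix.single j j 1 *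
      star (hA.eigenvectorUnitary : Matrix (Fin n) (Fin n) ℂ) with hP
  have hPpsd : ∀ j, (P j).PosSemidef := by
    intro j
    have := (stdBasis_psd (n := n) j).mul_mul_conjTranspose_same
      (hA.eigenvectorUnitary : Matrix (Fin n) (Fin n) ℂ)
    simpa [hP, Matrix.star_eq_conjTranspose] using this
  have hPsum : ∑ j, P j = 1 := by
    simp only [hP, ← Finset.sum_mul, ← Finset.mul_sum, stdBasis_sum, mul_one]
    exact Matrix.mem_unitaryGroup_iff.mp hA.eigenvectorUnitary.2
  have hAdec : A = ∑ j, (lam j : ℂ) • P j := spec_decomp hA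
  have hfAdec : hA.cfc f = ∑ j, ((f (lam j)) : ℂ) • P j := cfc_decomp hA f
  have hΦP : ∀ j, (Φ (P j)).PosSemidef := fun j => hΦ_pos _ (hPpsd j)
  have hΦA : (Φ A).IsHermitian := by
    rw [hAdec, map_sum]
    show Matrix.conjTranspose _ = _
    rw [Matrix.conjTranspose_sum]
    refine Finset.sum_congr rfl fun j _ => ?_
    rw [_root_.map_smul, Matrix.conjTranspose_smul, (hΦP j).isHermitian.eq, Complex.star_def,
      Complex.conj_ofReal]
  set mu := hΦA.eigenvalues with hmu
  set V : Matrix (Fin n) (Fin n) ℂ := (hΦA.eigenvectorUnitary : Matrix (Fin n) (Fin n) ℂ) with hV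
  have hVV : star V * V = 1 := Matrix.mem_unitaryGroup_iff'.mp hΦA.eigenvectorUnitary.2
  have hVV' : V * star V = 1 := Matrix.mem_unitaryGroup_iff.mp hΦA.eigenvectorUnitary.2
  set M : Fin n → Matrix (Fin n) (Fin n) ℂ := fun j => star V * Φ (P j) * V with hM
  have hMpsd : ∀ j, (M j).PosSemidef := by
    intro j
    have := (hΦP j).conjTranspose_mul_mul_same V
    simpa [hM, Matrix.star_eq_conjTranspose] using this
  have hMentry : ∀ i j, 0 ≤ (M j) i i := fun i j => psd_diag_nonneg (hMpsd j) i
  set w : Fin n → Fin n → ℝ := fun i j => ((M j) i i).re with hw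
  have hw0 : ∀ i j, 0 ≤ w i j := fun i j => (Complex.nonneg_iff.mp (hMentry i j)).1
  have hwim : ∀ i j, ((M j) i i) = (w i j : ℂ) := by
    intro i j
    have h := Complex.nonneg_iff.mp (hMentry i j)
    exact Complex.ext (by simp [hw]) (by simp [← h.2])
  have hMsum : ∑ j, M j = 1 := by
    simp only [hM, ← Finset.sum_mul, ← Finset.mul_sum, ← map_sum, hPsum, hΦ_unital, mul_one]
    exact hVV
  have hwsum : ∀ i, ∑ j, w i j = 1 := by
    intro i
    have h := congrArg (fun N => (N i i).re) hMsum
    simpa [Matrix.sum_apply, Complex.re_sum, Matrix.one_apply, hw] using h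
  have hdiag : star V * Φ A * V = diagonal (RCLike.ofReal ∘ mu) :=
    by rw [← hΦA.conjStarAlgAut_star_eigenvectorUnitary, Unitary.conjStarAlgAut_star_apply]
  have hconj : star V * Φ A * V = ∑ j, (lam j : ℂ) • M j := by
    conv_lhs => rw [hAdec, map_sum]
    simp only [_root_.map_smul, Finset.mul_sum, Finset.sum_mul, smul_mul_assoc, mul_smul_comm,
      hM]
  have hmu_eq : ∀ i, mu i = ∑ j, w i j * lam j := by
    intro i
    have h := congrArg (fun N => (N i i).re) (hdiag.symm.trans hconj)
    simp only [diagonal_apply_eq, Function.comp_apply, Matrix.sum_apply, Matrix.smul_apply,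
      hwim, smul_eq_mul, ← Complex.ofReal_mul, Complex.re_sum, Complex.ofReal_re] at h
    rw [show ((RCLike.ofReal (mu i) : ℂ)).re = mu i from rfl] at h
    rw [h]
    exact Finset.sum_congr rfl fun j _ => mul_comm _ _
  have hmem_mu : ∀ i, mu i ∈ Set.Icc a b := by
    intro i
    constructor
    · calc a = ∑ j, w i j * a := by rw [← Finset.sum_mul, hwsum, one_mul]
        _ ≤ ∑ j, w i j * lam j :=
          Finset.sum_le_sum fun j _ => mul_le_mul_of_nonneg_left (hspec j).1 (hw0 i j)
        _ = mu i := (hmu_eq i).symm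
    · calc mu i = ∑ j, w i j * lam j := hmu_eq i
        _ ≤ ∑ j, w i j * b :=
          Finset.sum_le_sum fun j _ => mul_le_mul_of_nonneg_left (hspec j).2 (hw0 i j)
        _ = b := by rw [← Finset.sum_mul, hwsum, one_mul]
  have ht1 : (hΦA.cfc f).trace = ((∑ i, f (mu i) : ℝ) : ℂ) := by
    rw [Matrix.IsHermitian.cfc, Unitary.conjStarAlgAut_apply, Matrix.trace_mul_cycle, ← hV, hVV, one_mul, Matrix.trace_diagonal]
    push_cast
    rfl
  have hΦPtr : ∀ j, (Φ (P j)).trace = ((∑ i, w i j : ℝ) : ℂ) := by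
    intro j
    have h : (Φ (P j)).trace = (M j).trace := by
      rw [hM, Matrix.trace_mul_cycle, hVV', one_mul]
    rw [h, Matrix.trace]
    push_cast
    exact Finset.sum_congr rfl fun i _ => hwim i j
  have ht2 : (Φ (hA.cfc f)).trace = ((∑ j, f (lam j) * ∑ i, w i j : ℝ) : ℂ) := by
    rw [hfAdec, map_sum, Matrix.trace_sum]
    push_cast
    refine Finset.sum_congr rfl fun j _ => ?_
    rw [_root_.map_smul, Matrix.trace_smul, smul_eq_mul, hΦPtr j]
    push_cast
    ring
  refine ⟨hΦA, hmem_mu, by simp [ht1], by simp [ht2], ?_⟩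
  rw [ht1, ht2, Complex.ofReal_re, Complex.ofReal_re]
  have key : ∀ i, f (mu i) ≤ ∑ j, w i j * f (lam j) := by
    intro i
    have := hf_conv.map_sum_le (t := Finset.univ) (w := w i) (p := lam)
      (fun j _ => hw0 i j) (hwsum i) (fun j _ => hspec j)
    simpa [smul_eq_mul, ← hmu_eq i] using this
  calc ∑ i, f (mu i) ≤ ∑ i, ∑ j, w i j * f (lam j) := Finset.sum_le_sum fun i _ => key i
    _ = ∑ j, f (lam j) * ∑ i, w i j := by
        rw [Finset.sum_comm]
        refine Finset.sum_congr rfl fun j _ => ?_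
        rw [Finset.mul_sum]
        exact Finset.sum_congr rfl fun i _ => mul_comm _ _
end

section
/- Let Φ : M_n(ℂ) → M_n(ℂ) be a trace-preserving unital positive linear map, i.e. Φ is linear, Φ(I) = I, Φ maps positive semidefinite matrices to positive semidefinite matrices, and trace(Φ(X)) = trace(X) for all X. Let f be a continuous positive-valued function on a real interval [a, b] such that log ∘ f is convex on [a, b], and let A be a Hermitian n×n matrix with spectrum contained in [a, b]. Then det(f(Φ(A))) ≤ det(f(A)) (both determinants are positive reals), where f is applied via the matrix functional calculus. -/
open scoped ComplexOrder

open Matrix in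
private lemma psd_diag_aux {n : ℕ} {M : Matrix (Fin n) (Fin n) ℂ} (hM : M.PosSemidef)
    (i : Fin n) : 0 ≤ (M i i).re ∧ M i i = ((M i i).re : ℂ) := by
  have h := (Matrix.posSemidef_iff_dotProduct_mulVec.mp hM).2 (Pi.single i 1)
  have hval : dotProduct (star (Pi.single i 1)) (M *ᵥ (Pi.single i 1)) = M i i := by
    simp [dotProduct, mulVec, Pi.single_apply, Finset.sum_ite_eq, Finset.sum_ite_eq',
      mul_comm]
  rw [hval] at h
  obtain ⟨hre, him⟩ := Complex.le_def.mp h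
  simp only [Complex.zero_re, Complex.zero_im] at hre him
  exact ⟨hre, by apply Complex.ext <;> simp [him.symm]⟩

open Matrix in
private lemma std_diag_eq {n : ℕ} (j : Fin n) :
    Matrix.single j j (1 : ℂ) = Matrix.diagonal (Pi.single j 1) := by
  ext i k
  by_cases h : i = k
  · subst h
    by_cases hj : j = i <;>
      simp [Matrix.single, Matrix.diagonal_apply, Pi.single_apply, hj, eq_comm]
  · have : ¬(j = i ∧ j = k) := by rintro ⟨rfl, rfl⟩; exact h rfl
    simp [Matrix.single, Matrix.diagonal_apply, h, this]

open Matrix in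
private lemma sum_std_diag (n : ℕ) :
    ∑ j : Fin n, Matrix.single j j (1 : ℂ) = 1 := by
  ext i k
  simp only [Matrix.sum_apply, std_diag_eq, Matrix.diagonal_apply, Matrix.one_apply]
  by_cases h : i = k
  · subst h; simp [Pi.single_apply, Finset.sum_ite_eq]
  · simp [h]

open Matrix in
private lemma diagonal_eq_sum_std {n : ℕ} (d : Fin n → ℝ) :
    Matrix.diagonal ((fun x : ℝ => (x : ℂ)) ∘ d)
      = ∑ j : Fin n, (d j : ℂ) • Matrix.single j j (1 : ℂ) := by
  ext i k
  simp only [Matrix.sum_apply, Matrix.smul_apply, std_diag_eq, Matrix.diagonal_apply,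
    Function.comp_apply, smul_eq_mul]
  by_cases h : i = k
  · subst h; simp [Pi.single_apply, Finset.sum_ite_eq, mul_ite]
  · simp [h]

open Matrix in
private lemma det_cfc_aux {n : ℕ} {A : Matrix (Fin n) (Fin n) ℂ} (hA : A.IsHermitian)
    (f : ℝ → ℝ) : (hA.cfc f).det = ((∏ i, f (hA.eigenvalues i) : ℝ) : ℂ) := by
  rw [Matrix.IsHermitian.cfc, Unitary.conjStarAlgAut_apply, Matrix.det_mul, Matrix.det_mul, Matrix.det_diagonal]
  rw [mul_comm (Matrix.det _) _, mul_assoc, ← Matrix.det_mul,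
    (Matrix.mem_unitaryGroup_iff).mp hA.eigenvectorUnitary.2, Matrix.det_one, mul_one]
  push_cast
  rfl

/-- **A determinant inequality for trace-preserving unital positive maps.** Let `Φ` be a
trace-preserving unital positive linear map on `n × n` complex matrices, `f` a continuous
positive log-convex function on `[a, b]`, and `A` Hermitian with spectrum (i.e. all
eigenvalues) contained in `[a, b]`.  Then `Φ A` is Hermitian and
`det (f (Φ A)) ≤ det (f A)`, both determinants being positive reals (compared in the
standard partial order on `ℂ`); here `f` is applied via the matrix functional
calculus. -/
theorem det_cfc_le_of_trace_preserving_unital_positive {n : ℕ}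
    (Φ : Matrix (Fin n) (Fin n) ℂ →ₗ[ℂ] Matrix (Fin n) (Fin n) ℂ)
    (hΦ_unital : Φ 1 = 1)
    (hΦ_pos : ∀ X : Matrix (Fin n) (Fin n) ℂ, X.PosSemidef → (Φ X).PosSemidef)
    (hΦ_trace : ∀ X : Matrix (Fin n) (Fin n) ℂ, (Φ X).trace = X.trace)
    {a b : ℝ} (f : ℝ → ℝ) (hf_cont : ContinuousOn f (Set.Icc a b))
    (hf_pos : ∀ x ∈ Set.Icc a b, 0 < f x)
    (hf_logconv : ConvexOn ℝ (Set.Icc a b) (fun x => Real.log (f x)))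
    {A : Matrix (Fin n) (Fin n) ℂ} (hA : A.IsHermitian)
    (hspec : ∀ i, hA.eigenvalues i ∈ Set.Icc a b) :
    ∃ hΦA : (Φ A).IsHermitian,
      0 < (hΦA.cfc f).det ∧ 0 < (hA.cfc f).det ∧
      (hΦA.cfc f).det ≤ (hA.cfc f).det := by
  classical
  set U : Matrix (Fin n) (Fin n) ℂ := (hA.eigenvectorUnitary : Matrix (Fin n) (Fin n) ℂ) with hU
  set lam : Fin n → ℝ := hA.eigenvalues with hlam
  have hU_unit : U * star U = 1 := (Matrix.mem_unitaryGroup_iff).mp hA.eigenvectorUnitary.2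
  have hU_unit' : star U * U = 1 := (Matrix.mem_unitaryGroup_iff').mp hA.eigenvectorUnitary.2
  set P : Fin n → Matrix (Fin n) (Fin n) ℂ :=
    fun j => U * Matrix.single j j 1 * star U with hP
  -- P j is PSD
  have hP_psd : ∀ j, (P j).PosSemidef := by
    intro j
    have h1 : (Matrix.single j j (1 : ℂ)).PosSemidef := by
      rw [std_diag_eq]
      refine Matrix.posSemidef_diagonal_iff.mpr fun i => ?_
      by_cases h : j = i <;> simp [Pi.single_apply, h]
    have := h1.mul_mul_conjTranspose_same U
    rwa [← Matrix.star_eq_conjTranspose] at this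
  -- trace of P j is 1
  have hP_tr : ∀ j, (P j).trace = 1 := by
    intro j
    rw [hP]
    rw [Matrix.trace_mul_cycle, hU_unit', one_mul, std_diag_eq,
      Matrix.trace_diagonal]
    simp [Pi.single_apply]
  -- ∑ P j = 1
  have hP_sum : ∑ j, P j = 1 := by
    rw [hP]
    simp only [← Finset.sum_mul, ← Finset.mul_sum]
    rw [sum_std_diag, mul_one, hU_unit]
  -- spectral decomposition of A as a sum
  have hA_eq : A = ∑ j, (lam j : ℂ) • P j := by
    conv_lhs => rw [hA.spectral_theorem, Unitary.conjStarAlgAut_apply]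
    have h2 : (Matrix.diagonal (RCLike.ofReal ∘ hA.eigenvalues) : Matrix (Fin n) (Fin n) ℂ)
        = ∑ j : Fin n, (lam j : ℂ) • Matrix.single j j (1 : ℂ) := by
      rw [← diagonal_eq_sum_std lam]; rfl
    rw [h2, Finset.mul_sum, Finset.sum_mul]
    refine Finset.sum_congr rfl fun j _ => ?_
    rw [Matrix.mul_smul, Matrix.smul_mul]
  -- image under Φ
  have hΦA_eq : Φ A = ∑ j, (lam j : ℂ) • Φ (P j) := by
    conv_lhs => rw [hA_eq]
    rw [map_sum]
    exact Finset.sum_congr rfl fun j _ => map_smul Φ _ _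
  -- Φ A is Hermitian
  have hB : (Φ A).IsHermitian := by
    show (Φ A).conjTranspose = Φ A
    conv_lhs => rw [hΦA_eq]
    conv_rhs => rw [hΦA_eq]
    rw [Matrix.conjTranspose_sum]
    refine Finset.sum_congr rfl fun j _ => ?_
    rw [Matrix.conjTranspose_smul, (hΦ_pos (P j) (hP_psd j)).isHermitian.eq,
      Complex.star_def, Complex.conj_ofReal]
  set V : Matrix (Fin n) (Fin n) ℂ := (hB.eigenvectorUnitary : Matrix (Fin n) (Fin n) ℂ)
    with hV
  have hV_unit : V * star V = 1 := (Matrix.mem_unitaryGroup_iff).mp hB.eigenvectorUnitary.2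
  have hV_unit' : star V * V = 1 := (Matrix.mem_unitaryGroup_iff').mp hB.eigenvectorUnitary.2
  set mu : Fin n → ℝ := hB.eigenvalues with hmu
  set c : Fin n → Fin n → ℝ := fun i j => ((star V * Φ (P j) * V) i i).re with hc
  have hQ_psd : ∀ j, (star V * Φ (P j) * V).PosSemidef := by
    intro j
    have := (hΦ_pos (P j) (hP_psd j)).conjTranspose_mul_mul_same V
    rwa [← Matrix.star_eq_conjTranspose] at this
  have hc_nonneg : ∀ i j, 0 ≤ c i j := fun i j => (psd_diag_aux (hQ_psd j) i).1
  have hc_entry : ∀ i j, (star V * Φ (P j) * V) i i = ((c i j : ℝ) : ℂ) :=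
    fun i j => (psd_diag_aux (hQ_psd j) i).2
  -- row sums are 1
  have hc_row : ∀ i, ∑ j, c i j = 1 := by
    intro i
    have h1 : ∑ j, (star V * Φ (P j) * V) i i = 1 := by
      have h2 : ∑ j, star V * Φ (P j) * V = star V * Φ (∑ j, P j) * V := by
        rw [map_sum, Finset.mul_sum, Finset.sum_mul]
      calc ∑ j, (star V * Φ (P j) * V) i i
          = (∑ j, star V * Φ (P j) * V) i i := by rw [Matrix.sum_apply]
        _ = (star V * Φ (∑ j, P j) * V) i i := by rw [h2]
        _ = 1 := by
            rw [hP_sum, hΦ_unital, mul_one, hV_unit']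
            simp [Matrix.one_apply]
    have h3 : ((∑ j, c i j : ℝ) : ℂ) = 1 := by
      push_cast
      rw [← h1]
      exact Finset.sum_congr rfl fun j _ => (hc_entry i j).symm
    exact_mod_cast h3
  -- column sums are 1
  have hc_col : ∀ j, ∑ i, c i j = 1 := by
    intro j
    have h1 : ∑ i, (star V * Φ (P j) * V) i i = 1 := by
      have h2 : (star V * Φ (P j) * V).trace = 1 := by
        rw [Matrix.trace_mul_cycle, hV_unit, one_mul, hΦ_trace, hP_tr]
      simpa [Matrix.trace, Matrix.diag] using h2
    have h3 : ((∑ i, c i j : ℝ) : ℂ) = 1 := by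
      push_cast
      rw [← h1]
      exact Finset.sum_congr rfl fun i _ => (hc_entry i j).symm
    exact_mod_cast h3
  -- eigenvalues of Φ A as convex combinations
  have hmu_eq : ∀ i, mu i = ∑ j, c i j * lam j := by
    intro i
    have h1 : (star V * Φ A * V) i i = ((mu i : ℝ) : ℂ) := by
      rw [show star V * Φ A * V = Matrix.diagonal (RCLike.ofReal ∘ hB.eigenvalues) from by
        rw [hV, ← hB.conjStarAlgAut_star_eigenvectorUnitary]
        simp only [Unitary.conjStarAlgAut_apply, Unitary.coe_star, star_star]]
      simp [Matrix.diagonal_apply, hmu]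
    have h2 : (star V * Φ A * V) i i = ((∑ j, c i j * lam j : ℝ) : ℂ) := by
      have h4 : star V * Φ A * V = ∑ j, (lam j : ℂ) • (star V * Φ (P j) * V) := by
        conv_lhs => rw [hΦA_eq]
        rw [Finset.mul_sum, Finset.sum_mul]
        refine Finset.sum_congr rfl fun j _ => ?_
        rw [Matrix.mul_smul, Matrix.smul_mul]
      rw [h4]
      push_cast
      rw [Matrix.sum_apply]
      refine Finset.sum_congr rfl fun j _ => ?_
      rw [Matrix.smul_apply, hc_entry i j, smul_eq_mul, mul_comm]
    have h5 := h1.symm.trans h2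
    exact_mod_cast h5
  have hmu_mem : ∀ i, mu i ∈ Set.Icc a b := by
    intro i
    rw [hmu_eq i]
    exact (convex_Icc a b).sum_mem (fun j _ => hc_nonneg i j)
      (hc_row i) (fun j _ => hspec j)
  -- the key log-sum inequality
  have key : ∑ i, Real.log (f (mu i)) ≤ ∑ j, Real.log (f (lam j)) := by
    calc ∑ i, Real.log (f (mu i))
        ≤ ∑ i, ∑ j, c i j * Real.log (f (lam j)) := by
          refine Finset.sum_le_sum fun i _ => ?_
          have h6 := hf_logconv.map_sum_le (t := Finset.univ) (w := c i) (p := lam)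
            (fun j _ => hc_nonneg i j) (hc_row i) (fun j _ => hspec j)
          simpa [smul_eq_mul, ← hmu_eq i] using h6
      _ = ∑ j, (∑ i, c i j) * Real.log (f (lam j)) := by
          rw [Finset.sum_comm]
          exact Finset.sum_congr rfl fun j _ => by rw [Finset.sum_mul]
      _ = ∑ j, Real.log (f (lam j)) :=
          Finset.sum_congr rfl fun j _ => by rw [hc_col j, one_mul]
  have hprod : ∏ i, f (mu i) ≤ ∏ j, f (lam j) := by
    have e1 : ∏ i, f (mu i) = Real.exp (∑ i, Real.log (f (mu i))) := by
      rw [Real.exp_sum]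
      exact Finset.prod_congr rfl fun i _ => (Real.exp_log (hf_pos _ (hmu_mem i))).symm
    have e2 : ∏ j, f (lam j) = Real.exp (∑ j, Real.log (f (lam j))) := by
      rw [Real.exp_sum]
      exact Finset.prod_congr rfl fun j _ => (Real.exp_log (hf_pos _ (hspec j))).symm
    rw [e1, e2]
    exact Real.exp_le_exp.mpr key
  refine ⟨hB, ?_, ?_, ?_⟩
  · rw [det_cfc_aux]
    exact Complex.zero_lt_real.mpr <| Finset.prod_pos fun i _ => hf_pos _ (hmu_mem i)
  · rw [det_cfc_aux]
    exact Complex.zero_lt_real.mpr <| Finset.prod_pos fun i _ => hf_pos _ (hspec i)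
  · rw [det_cfc_aux, det_cfc_aux]
    exact Complex.real_le_real.mpr hprod
end

section
/- Let Φ : M_n(ℂ) → M_n(ℂ) be a trace-preserving unital positive linear map. Then: (i) for every positive semidefinite A, det A ≤ det Φ(A) (both determinants are nonnegative reals); (ii) for every positive definite A, the matrix Φ(A⁻¹) is positive definite and det(Φ(A⁻¹))⁻¹ ≤ det A, i.e. 1 ≤ det A · det Φ(A⁻¹). -/
open scoped ComplexOrder
open Matrix Finset


open Finset in
/-- Greedy bound: if `t ∈ [0,1]` sums to `k` and `d` is nonincreasing on `range n`,
then `∑ d i * t i ≤ ∑_{i<k} d i`. -/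
lemma aux_greedy (n k : ℕ) (hk : k ≤ n) (d t : ℕ → ℝ)
    (hd : ∀ i j, i ≤ j → j < n → d j ≤ d i)
    (ht0 : ∀ i < n, 0 ≤ t i) (ht1 : ∀ i < n, t i ≤ 1)
    (hsum : ∑ i ∈ range n, t i = k) :
    ∑ i ∈ range n, d i * t i ≤ ∑ i ∈ range k, d i := by
  rcases Nat.eq_zero_or_pos k with hk0 | hk0
  · subst hk0
    have hz : ∀ i ∈ range n, t i = 0 := by
      have : ∑ i ∈ range n, t i = 0 := by simpa using hsum
      exact (Finset.sum_eq_zero_iff_of_nonneg (fun i hi => ht0 i (mem_range.mp hi))).mp this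
    simp only [range_zero, sum_empty]
    apply le_of_eq
    apply Finset.sum_eq_zero
    intro i hi
    rw [hz i hi, mul_zero]
  · set c := d (k - 1) with hc
    have hsplit : ∑ i ∈ range n, d i * t i
        = ∑ i ∈ range k, d i * t i + ∑ i ∈ Ico k n, d i * t i := by
      rw [range_eq_Ico, ← Finset.sum_Ico_consecutive _ (Nat.zero_le k) hk, ← range_eq_Ico]
    have h1 : ∑ i ∈ range k, d i * t i ≤ ∑ i ∈ range k, (d i + c * t i - c) := by
      apply Finset.sum_le_sum
      intro i hi
      have hik : i < k := mem_range.mp hi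
      have hin : i < n := lt_of_lt_of_le hik hk
      have hdc : c ≤ d i := hd i (k - 1) (Nat.le_sub_one_of_lt hik) (Nat.lt_of_lt_of_le (Nat.sub_lt hk0 one_pos) hk)
      have := ht1 i hin
      nlinarith [mul_nonneg (sub_nonneg.mpr hdc) (sub_nonneg.mpr this)]
    have h2 : ∑ i ∈ Ico k n, d i * t i ≤ ∑ i ∈ Ico k n, c * t i := by
      apply Finset.sum_le_sum
      intro i hi
      obtain ⟨hki, hin⟩ := mem_Ico.mp hi
      have hdc : d i ≤ c := hd (k - 1) i (le_trans (Nat.sub_le k 1) hki) hin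
      exact mul_le_mul_of_nonneg_right hdc (ht0 i hin)
    have hts : ∑ i ∈ range k, t i + ∑ i ∈ Ico k n, t i = (k : ℝ) := by
      rw [range_eq_Ico, Finset.sum_Ico_consecutive _ (Nat.zero_le k) hk, ← range_eq_Ico, hsum]
    have hexp : ∑ i ∈ range k, (d i + c * t i - c)
        = ∑ i ∈ range k, d i + c * ∑ i ∈ range k, t i - k * c := by
      rw [Finset.sum_sub_distrib, Finset.sum_add_distrib, ← Finset.mul_sum]
      simp [mul_comm]
    have hexp2 : ∑ i ∈ Ico k n, c * t i = c * ∑ i ∈ Ico k n, t i := by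
      rw [Finset.mul_sum]
    calc ∑ i ∈ range n, d i * t i
        ≤ ∑ i ∈ range k, d i + c * ∑ i ∈ range k, t i - k * c + c * ∑ i ∈ Ico k n, t i := by
          rw [hsplit]; rw [hexp] at h1; rw [hexp2] at h2; linarith
      _ = ∑ i ∈ range k, d i + c * (∑ i ∈ range k, t i + ∑ i ∈ Ico k n, t i) - k * c := by ring
      _ = ∑ i ∈ range k, d i := by rw [hts]; ring


open Finset in
/-- Abel-summation bound: with `c` nondecreasing on `range n` and all partial sums of `a`
nonnegative, `∑ c i * a i ≤ c (n-1) * (∑ a i)`. -/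
lemma aux_abel (n : ℕ) (a c : ℕ → ℝ)
    (hc : ∀ i j, i ≤ j → j < n → c i ≤ c j)
    (hS : ∀ k ≤ n, 0 ≤ ∑ i ∈ range k, a i)
    (hSn : ∑ i ∈ range n, a i = 0) :
    ∑ i ∈ range n, c i * a i ≤ 0 := by
  rcases Nat.eq_zero_or_pos n with h0 | hn
  · subst h0; simp
  have key : ∀ m : ℕ, m + 1 ≤ n →
      ∑ i ∈ range (m + 1), c i * a i ≤ c m * ∑ i ∈ range (m + 1), a i := by
    intro m
    induction m with
    | zero => intro _; simp
    | succ m ih =>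
      intro hm
      have hm' : m + 1 ≤ n := le_of_lt (Nat.lt_of_succ_le hm)
      have h1 := ih hm'
      have hcc : c m ≤ c (m + 1) := hc m (m + 1) (Nat.le_succ m) (Nat.lt_of_succ_le hm)
      have hSm : 0 ≤ ∑ i ∈ range (m + 1), a i := hS (m + 1) hm'
      rw [Finset.sum_range_succ (fun i => c i * a i), Finset.sum_range_succ a]
      calc ∑ i ∈ range (m + 1), c i * a i + c (m + 1) * a (m + 1)
          ≤ c m * ∑ i ∈ range (m + 1), a i + c (m + 1) * a (m + 1) := by linarith
        _ ≤ c (m + 1) * ∑ i ∈ range (m + 1), a i + c (m + 1) * a (m + 1) :=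
            by nlinarith
        _ = c (m + 1) * (∑ i ∈ range (m + 1), a i + a (m + 1)) := by ring
  obtain ⟨m, rfl⟩ := Nat.exists_eq_add_of_lt (Nat.lt_of_lt_of_le hn le_rfl) |>.imp (fun _ h => h) |> fun _ => Nat.exists_eq_succ_of_ne_zero (Nat.pos_iff_ne_zero.mp hn)
  have := key m (le_refl (m + 1))
  rw [hSn] at this
  simpa using this

open Finset in
/-- Schur-concavity of the product: if positive `d` majorizes nonincreasing `μ`
(partial sums of `μ` below those of `d`, equal totals), then `∏ d ≤ ∏ μ`. -/
lemma aux_prod (n : ℕ) (d μ : ℕ → ℝ)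
    (hd : ∀ i < n, 0 < d i)
    (hμa : ∀ i j, i ≤ j → j < n → μ j ≤ μ i)
    (hmaj : ∀ k ≤ n, ∑ i ∈ range k, μ i ≤ ∑ i ∈ range k, d i)
    (htot : ∑ i ∈ range n, d i = ∑ i ∈ range n, μ i) :
    ∏ i ∈ range n, d i ≤ ∏ i ∈ range n, μ i := by
  rcases Nat.eq_zero_or_pos n with h0 | hn
  · subst h0; simp
  -- positivity of μ
  have hμlast : 0 < μ (n - 1) := by
    obtain ⟨m, rfl⟩ := Nat.exists_eq_succ_of_ne_zero (Nat.pos_iff_ne_zero.mp hn)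
    simp only [Nat.succ_sub_one]
    have h1 : ∑ i ∈ range m, μ i ≤ ∑ i ∈ range m, d i := hmaj m (Nat.le_succ m)
    have h2 := htot
    rw [Finset.sum_range_succ d, Finset.sum_range_succ μ] at h2
    have := hd m (Nat.lt_succ_self m)
    linarith
  have hμ : ∀ i < n, 0 < μ i := fun i hi =>
    lt_of_lt_of_le hμlast (hμa i (n - 1) (Nat.le_sub_one_of_lt hi) (Nat.sub_lt hn one_pos))
  -- log comparison
  have hlog : ∑ i ∈ range n, Real.log (d i) ≤ ∑ i ∈ range n, Real.log (μ i) := by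
    have step : ∀ i < n, Real.log (d i) - Real.log (μ i) ≤ (μ i)⁻¹ * (d i - μ i) := by
      intro i hi
      have hdi := hd i hi
      have hμi := hμ i hi
      have h := Real.log_le_sub_one_of_pos (show (0:ℝ) < d i / μ i from div_pos hdi hμi)
      rw [Real.log_div (ne_of_gt hdi) (ne_of_gt hμi)] at h
      have : d i / μ i - 1 = (μ i)⁻¹ * (d i - μ i) := by field_simp
      linarith [this ▸ h]
    have habel : ∑ i ∈ range n, (μ i)⁻¹ * (d i - μ i) ≤ 0 := by
      apply aux_abel n (fun i => d i - μ i) (fun i => (μ i)⁻¹)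
      · intro i j hij hjn
        exact inv_anti₀ (hμ j hjn) (hμa i j hij hjn)
      · intro k hk
        rw [Finset.sum_sub_distrib]
        linarith [hmaj k hk]
      · rw [Finset.sum_sub_distrib]; linarith [htot]
    have hsum : ∑ i ∈ range n, (Real.log (d i) - Real.log (μ i))
        ≤ ∑ i ∈ range n, (μ i)⁻¹ * (d i - μ i) :=
      Finset.sum_le_sum (fun i hi => step i (mem_range.mp hi))
    rw [Finset.sum_sub_distrib] at hsum
    linarith
  -- exponentiate
  have hde : ∏ i ∈ range n, d i = Real.exp (∑ i ∈ range n, Real.log (d i)) := by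
    rw [Real.exp_sum]
    exact (Finset.prod_congr rfl (fun i hi => (Real.exp_log (hd i (mem_range.mp hi))).symm))
  have hμe : ∏ i ∈ range n, μ i = Real.exp (∑ i ∈ range n, Real.log (μ i)) := by
    rw [Real.exp_sum]
    exact (Finset.prod_congr rfl (fun i hi => (Real.exp_log (hμ i (mem_range.mp hi))).symm))
  rw [hde, hμe]
  exact Real.exp_le_exp.mpr hlog


variable {n : ℕ}

lemma trace_nonneg_of_posSemidef {M : Matrix (Fin n) (Fin n) ℂ} (hM : M.PosSemidef) :
    0 ≤ M.trace := by
  rw [Matrix.trace]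
  apply Finset.sum_nonneg
  intro i _
  have h := hM.dotProduct_mulVec_nonneg (Pi.single i 1)
  simp only [dotProduct, Matrix.mulVec_single, Pi.star_apply, Pi.single_apply,
    apply_ite (star : ℂ → ℂ), star_one, star_zero, ite_mul, one_mul, zero_mul, mul_one,
    Finset.sum_ite_eq, Finset.mem_univ, if_true] at h
  simpa using h

lemma trace_mul_nonneg_of_posSemidef {P Q : Matrix (Fin n) (Fin n) ℂ}
    (hP : P.PosSemidef) (hQ : Q.PosSemidef) : 0 ≤ (P * Q).trace := by
  obtain ⟨B, rfl⟩ : ∃ B : Matrix (Fin n) (Fin n) ℂ, P = Bᴴ * B := by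
    open scoped MatrixOrder in exact CStarAlgebra.nonneg_iff_eq_star_mul_self.mp hP.nonneg
  have h1 : (Bᴴ * B * Q).trace = (B * Q * Bᴴ).trace := by
    rw [Matrix.trace_mul_cycle, Matrix.trace_mul_cycle]
  rw [h1]
  exact trace_nonneg_of_posSemidef (hQ.mul_mul_conjTranspose_same B)

lemma posDef_of_posSemidef_det_ne_zero_s18 {A : Matrix (Fin n) (Fin n) ℂ}
    (hA : A.PosSemidef) (h : A.det ≠ 0) : A.PosDef := by
  obtain ⟨B, hB⟩ : ∃ B : Matrix (Fin n) (Fin n) ℂ, A = Bᴴ * B := by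
    open scoped MatrixOrder in exact CStarAlgebra.nonneg_iff_eq_star_mul_self.mp hA.nonneg
  have hdet : B.det ≠ 0 := by
    intro hz
    apply h
    rw [hB, Matrix.det_mul, Matrix.det_conjTranspose, hz, star_zero, zero_mul]
  have hinj : Function.Injective B.mulVec :=
    Matrix.mulVec_injective_iff_isUnit.mpr ((Matrix.isUnit_iff_isUnit_det B).mpr hdet.isUnit)
  refine Matrix.posDef_iff_dotProduct_mulVec.mpr ⟨hA.isHermitian, fun x hx => ?_⟩
  have hBx : B *ᵥ x ≠ 0 := fun hz => hx (hinj (by simpa using hz))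
  have key : dotProduct (star x) (A *ᵥ x)
      = dotProduct (star (B *ᵥ x)) (B *ᵥ x) := by
    rw [hB, Matrix.star_mulVec, Matrix.dotProduct_mulVec, ← Matrix.vecMul_vecMul, Matrix.dotProduct_mulVec]
  rw [key]
  exact Matrix.dotProduct_star_self_pos_iff.mpr hBx





section Reindex

variable {n : ℕ} {M : Type*} [AddCommMonoid M]

lemma sum_range_dite (f : Fin n → M) :
    ∑ i ∈ range n, (if h : i < n then f ⟨i, h⟩ else 0) = ∑ i, f i := by
  rw [← Fin.sum_univ_eq_sum_range]
  exact Finset.sum_congr rfl (fun i _ => by simp)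

lemma prod_range_dite (f : Fin n → ℝ) :
    ∏ i ∈ range n, (if h : i < n then f ⟨i, h⟩ else 1) = ∏ i, f i := by
  rw [← Fin.prod_univ_eq_prod_range]
  exact Finset.prod_congr rfl (fun i _ => by simp)

lemma sum_univ_ite_lt {k : ℕ} (hk : k ≤ n) (f : Fin n → M) :
    ∑ i : Fin n, (if (i : ℕ) < k then f i else 0)
      = ∑ i ∈ range k, (if h : i < n then f ⟨i, h⟩ else 0) := by
  have h1 : ∑ i : Fin n, (if (i : ℕ) < k then f i else 0)
      = ∑ m ∈ range n, (if h : m < n then (if m < k then f ⟨m, h⟩ else 0) else 0) := by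
    rw [← Fin.sum_univ_eq_sum_range]
    exact Finset.sum_congr rfl (fun i _ => by simp)
  have h2 : ∑ m ∈ range n, (if h : m < n then (if m < k then f ⟨m, h⟩ else 0) else 0)
      = ∑ m ∈ range k, (if h : m < n then (if m < k then f ⟨m, h⟩ else 0) else 0) := by
    refine (Finset.sum_subset (Finset.range_subset_range.mpr hk) ?_).symm
    intro x _ hxk
    have hx : ¬ x < k := fun h => hxk (Finset.mem_range.mpr h)
    simp [hx]
  have h3 : ∑ m ∈ range k, (if h : m < n then (if m < k then f ⟨m, h⟩ else 0) else 0)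
      = ∑ m ∈ range k, (if h : m < n then f ⟨m, h⟩ else 0) := by
    refine Finset.sum_congr rfl (fun m hm => ?_)
    simp [Finset.mem_range.mp hm]
  rw [h1, h2, h3]

end Reindex

section Conj

variable {n : ℕ} (U : Matrix.unitaryGroup (Fin n) ℂ)

lemma conj_mul_conj (X Y : Matrix (Fin n) (Fin n) ℂ) :
    ((U : Matrix (Fin n) (Fin n) ℂ) * X * star (U : Matrix (Fin n) (Fin n) ℂ))
      * ((U : Matrix (Fin n) (Fin n) ℂ) * Y * star (U : Matrix (Fin n) (Fin n) ℂ))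
    = (U : Matrix (Fin n) (Fin n) ℂ) * (X * Y) * star (U : Matrix (Fin n) (Fin n) ℂ) := by
  have h : star (U : Matrix (Fin n) (Fin n) ℂ) * (U : Matrix (Fin n) (Fin n) ℂ) = 1 :=
    Matrix.mem_unitaryGroup_iff'.mp U.2
  simp only [mul_assoc]
  rw [← mul_assoc (star (U : Matrix (Fin n) (Fin n) ℂ)) (U : Matrix (Fin n) (Fin n) ℂ), h,
    one_mul]

lemma conj_trace (X : Matrix (Fin n) (Fin n) ℂ) :
    ((U : Matrix (Fin n) (Fin n) ℂ) * X * star (U : Matrix (Fin n) (Fin n) ℂ)).trace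
      = X.trace := by
  have h : star (U : Matrix (Fin n) (Fin n) ℂ) * (U : Matrix (Fin n) (Fin n) ℂ) = 1 :=
    Matrix.mem_unitaryGroup_iff'.mp U.2
  rw [Matrix.trace_mul_cycle, h, one_mul]

lemma conj_posSemidef {X : Matrix (Fin n) (Fin n) ℂ} (hX : X.PosSemidef) :
    ((U : Matrix (Fin n) (Fin n) ℂ) * X * star (U : Matrix (Fin n) (Fin n) ℂ)).PosSemidef := by
  rw [Matrix.star_eq_conjTranspose]
  exact hX.mul_mul_conjTranspose_same _

lemma conj_one_sub (χ : Fin n → ℂ) :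
    (1 : Matrix (Fin n) (Fin n) ℂ)
        - (U : Matrix (Fin n) (Fin n) ℂ) * Matrix.diagonal χ * star (U : Matrix (Fin n) (Fin n) ℂ)
      = (U : Matrix (Fin n) (Fin n) ℂ) * Matrix.diagonal (fun j => 1 - χ j)
          * star (U : Matrix (Fin n) (Fin n) ℂ) := by
  have h : (U : Matrix (Fin n) (Fin n) ℂ) * star (U : Matrix (Fin n) (Fin n) ℂ) = 1 :=
    Matrix.mem_unitaryGroup_iff.mp U.2
  have : Matrix.diagonal (fun j => 1 - χ j) = 1 - Matrix.diagonal χ := by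
    rw [← Matrix.diagonal_one, ← Matrix.diagonal_sub]
  rw [this, Matrix.mul_sub, Matrix.sub_mul, mul_one, h]

lemma diagonal_eq_sum_single (v : Fin n → ℂ) :
    Matrix.diagonal v = ∑ i, v i • Matrix.diagonal (Pi.single i (1 : ℂ)) := by
  ext j k
  simp only [Matrix.sum_apply, Matrix.smul_apply, Matrix.diagonal_apply, Pi.single_apply,
    smul_eq_mul]
  by_cases h : j = k
  · subst h
    simp [eq_comm]
  · simp [h]

end Conj

section Core

variable {n : ℕ}

lemma core_det_le (Φ : Matrix (Fin n) (Fin n) ℂ →ₗ[ℂ] Matrix (Fin n) (Fin n) ℂ)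
    (hΦ_unital : Φ 1 = 1)
    (hΦ_pos : ∀ X : Matrix (Fin n) (Fin n) ℂ, X.PosSemidef → (Φ X).PosSemidef)
    (hΦ_trace : ∀ X : Matrix (Fin n) (Fin n) ℂ, (Φ X).trace = X.trace)
    {A : Matrix (Fin n) (Fin n) ℂ} (hA : A.PosDef) : A.det ≤ (Φ A).det := by
  classical
  have hH : A.IsHermitian := hA.isHermitian
  set d : Fin n → ℝ := hH.eigenvalues with hd_def
  set Uu := hH.eigenvectorUnitary with hUu
  set U : Matrix (Fin n) (Fin n) ℂ := (Uu : Matrix (Fin n) (Fin n) ℂ) with hU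
  have hAspec : A = U * Matrix.diagonal (Complex.ofReal ∘ d) * star U := hH.spectral_theorem
  have hB_psd : (Φ A).PosSemidef := hΦ_pos A hA.posSemidef
  set B : Matrix (Fin n) (Fin n) ℂ := Φ A with hB
  have hBH : B.IsHermitian := hB_psd.isHermitian
  set μ : Fin n → ℝ := hBH.eigenvalues with hμ_def
  set Vu := hBH.eigenvectorUnitary with hVu
  set V : Matrix (Fin n) (Fin n) ℂ := (Vu : Matrix (Fin n) (Fin n) ℂ) with hV
  have hBspec : B = V * Matrix.diagonal (Complex.ofReal ∘ μ) * star V := hBH.spectral_theorem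
  -- rank-one pieces
  set E : Fin n → Matrix (Fin n) (Fin n) ℂ :=
    fun i => U * Matrix.diagonal (Pi.single i (1 : ℂ)) * star U with hE
  have hE_psd : ∀ i, (E i).PosSemidef := by
    intro i
    exact conj_posSemidef Uu (Matrix.PosSemidef.diagonal (by
      intro j
      by_cases h : j = i <;> simp [Pi.single_apply, h]))
  have hE_trace : ∀ i, (E i).trace = 1 := by
    intro i
    rw [hE]
    rw [conj_trace Uu, Matrix.trace_diagonal]
    simp
  have hdiag1 : ∑ i : Fin n, Matrix.diagonal (Pi.single i (1 : ℂ)) = (1 : Matrix (Fin n) (Fin n) ℂ) := by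
    ext j l
    by_cases h : j = l
    · subst h
      simp [Matrix.sum_apply, Matrix.diagonal_apply, Pi.single_apply, eq_comm]
    · simp [Matrix.sum_apply, Matrix.diagonal_apply, Pi.single_apply, h]
  have hE_sum : ∑ i, E i = 1 := by
    rw [hE, ← Finset.sum_mul, ← Finset.mul_sum, hdiag1, mul_one]
    exact Matrix.mem_unitaryGroup_iff.mp Uu.2
  have hA_sum : A = ∑ i, (d i : ℂ) • E i := by
    have hdiagd : Matrix.diagonal (Complex.ofReal ∘ d)
        = ∑ i : Fin n, (d i : ℂ) • Matrix.diagonal (Pi.single i (1 : ℂ)) :=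
      diagonal_eq_sum_single (Complex.ofReal ∘ d)
    calc A = U * (∑ i, ((d i : ℂ)) • Matrix.diagonal (Pi.single i (1 : ℂ))) * star U := by
          rw [hAspec, hdiagd]
      _ = ∑ i, (d i : ℂ) • E i := by
          rw [Finset.mul_sum, Finset.sum_mul]
          refine Finset.sum_congr rfl fun i _ => ?_
          rw [mul_smul_comm, smul_mul_assoc, hE]
  -- sorting permutations
  set σ : Equiv.Perm (Fin n) := Tuple.sort (fun i => -d i) with hσ
  set τ : Equiv.Perm (Fin n) := Tuple.sort (fun i => -μ i) with hτ
  set D : ℕ → ℝ := fun i => if h : i < n then d (σ ⟨i, h⟩) else 0 with hD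
  set Mu : ℕ → ℝ := fun i => if h : i < n then μ (τ ⟨i, h⟩) else 0 with hMu
  have hD_pos : ∀ i < n, 0 < D i := by
    intro i hi
    simp only [hD, dif_pos hi]
    exact hA.eigenvalues_pos _
  have hD_anti : ∀ i j, i ≤ j → j < n → D j ≤ D i := by
    intro i j hij hj
    have hi : i < n := lt_of_le_of_lt hij hj
    simp only [hD, dif_pos hi, dif_pos hj]
    have := Tuple.monotone_sort (fun i => -d i) (a := ⟨i, hi⟩) (b := ⟨j, hj⟩) (by exact hij)
    simpa using this
  have hMu_anti : ∀ i j, i ≤ j → j < n → Mu j ≤ Mu i := by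
    intro i j hij hj
    have hi : i < n := lt_of_le_of_lt hij hj
    simp only [hMu, dif_pos hi, dif_pos hj]
    have := Tuple.monotone_sort (fun i => -μ i) (a := ⟨i, hi⟩) (b := ⟨j, hj⟩) (by exact hij)
    simpa using this
  -- traces and totals
  have htraceA : A.trace = ((∑ i, d i : ℝ) : ℂ) := by
    rw [hAspec, conj_trace Uu, Matrix.trace_diagonal]
    push_cast
    rfl
  have htraceB : B.trace = ((∑ i, μ i : ℝ) : ℂ) := by
    rw [hBspec, conj_trace Vu, Matrix.trace_diagonal]
    push_cast
    rfl
  have htot : ∑ i ∈ range n, D i = ∑ i ∈ range n, Mu i := by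
    have h1 : ((∑ i, μ i : ℝ) : ℂ) = ((∑ i, d i : ℝ) : ℂ) := by
      rw [← htraceA, ← htraceB, hB, hΦ_trace]
    have h2 : ∑ i, μ i = ∑ i, d i := by exact_mod_cast h1
    have e1 : ∑ i ∈ range n, D i = ∑ i, d (σ i) := sum_range_dite fun i => d (σ i)
    have e2 : ∑ i ∈ range n, Mu i = ∑ i, μ (τ i) := sum_range_dite fun i => μ (τ i)
    rw [e1, e2, Equiv.sum_comp σ d, Equiv.sum_comp τ μ, h2]
  -- majorization
  have hmaj : ∀ k ≤ n, ∑ i ∈ range k, Mu i ≤ ∑ i ∈ range k, D i := by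
    intro k hk
    set χ : Fin n → ℂ := fun j => if ((τ.symm j : Fin n) : ℕ) < k then 1 else 0 with hχ
    set P : Matrix (Fin n) (Fin n) ℂ := V * Matrix.diagonal χ * star V with hP
    have hχ0 : 0 ≤ χ := by
      intro j
      by_cases h : ((τ.symm j : Fin n) : ℕ) < k <;> simp [hχ, h]
    have hP_psd : P.PosSemidef := conj_posSemidef Vu (Matrix.PosSemidef.diagonal hχ0)
    have h1P_psd : ((1 : Matrix (Fin n) (Fin n) ℂ) - P).PosSemidef := by
      rw [hP, conj_one_sub Vu χ]
      refine conj_posSemidef Vu (Matrix.PosSemidef.diagonal ?_)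
      intro j
      by_cases h : ((τ.symm j : Fin n) : ℕ) < k <;> simp [hχ, h]
    set t : Fin n → ℝ := fun i => (P * Φ (E i)).trace.re with ht
    have htr : ∀ i, (P * Φ (E i)).trace = ((t i : ℝ) : ℂ) := by
      intro i
      have h0 := trace_mul_nonneg_of_posSemidef hP_psd (hΦ_pos _ (hE_psd i))
      have him : ((P * Φ (E i)).trace).im = 0 := by
        have := (Complex.le_def.mp h0).2
        simpa using this.symm
      apply Complex.ext
      · simp [ht]
      · simp [him]
    have ht0 : ∀ i, 0 ≤ t i := by
      intro i
      have h0 := trace_mul_nonneg_of_posSemidef hP_psd (hΦ_pos _ (hE_psd i))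
      have := (Complex.le_def.mp h0).1
      simpa [ht] using this
    have ht1 : ∀ i, t i ≤ 1 := by
      intro i
      have h0 := trace_mul_nonneg_of_posSemidef h1P_psd (hΦ_pos _ (hE_psd i))
      have hexp : ((1 : Matrix (Fin n) (Fin n) ℂ) - P) * Φ (E i)
          = Φ (E i) - P * Φ (E i) := by
        rw [Matrix.sub_mul, Matrix.one_mul]
      rw [hexp, Matrix.trace_sub, hΦ_trace, hE_trace i, htr i] at h0
      have := (Complex.le_def.mp h0).1
      simp only [Complex.zero_re, Complex.sub_re, Complex.one_re, Complex.ofReal_re] at this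
      linarith
    have hsumt : ∑ i, t i = (k : ℝ) := by
      have hstep : ∑ i, (P * Φ (E i)).trace = (k : ℂ) := by
        have h1 : ∑ i, (P * Φ (E i)).trace = (P * Φ (∑ i, E i)).trace := by
          rw [map_sum, Finset.mul_sum, Matrix.trace_sum]
        rw [h1, hE_sum, hΦ_unital, mul_one, hP, conj_trace Vu, Matrix.trace_diagonal]
        calc ∑ j, χ j = ∑ i, χ (τ i) := (Equiv.sum_comp τ χ).symm
          _ = ∑ i : Fin n, (if (i : ℕ) < k then (1 : ℂ) else 0) := by
              refine Finset.sum_congr rfl fun i _ => ?_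
              simp [hχ]
          _ = ∑ m ∈ range k, (if h : m < n then (1 : ℂ) else 0) :=
              sum_univ_ite_lt hk (fun _ => (1 : ℂ))
          _ = ∑ m ∈ range k, (1 : ℂ) := by
              refine Finset.sum_congr rfl fun m hm => ?_
              simp [lt_of_lt_of_le (Finset.mem_range.mp hm) hk]
          _ = (k : ℂ) := by simp
      have : ((∑ i, t i : ℝ) : ℂ) = (k : ℂ) := by
        rw [Complex.ofReal_sum]
        rw [← hstep]
        exact Finset.sum_congr rfl fun i _ => (htr i).symm
      exact_mod_cast this
    have hPB : (P * B).trace = ((∑ i ∈ range k, Mu i : ℝ) : ℂ) := by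
      have h1 : P * B = V * (Matrix.diagonal χ * Matrix.diagonal (Complex.ofReal ∘ μ)) * star V := by
        rw [hP, hBspec]
        exact conj_mul_conj Vu _ _
      rw [h1, conj_trace Vu, Matrix.diagonal_mul_diagonal, Matrix.trace_diagonal]
      calc ∑ j, χ j * ((μ j : ℝ) : ℂ)
          = ∑ i, χ (τ i) * ((μ (τ i) : ℝ) : ℂ) := (Equiv.sum_comp τ _).symm
        _ = ∑ i : Fin n, (if (i : ℕ) < k then ((μ (τ i) : ℝ) : ℂ) else 0) := by
            refine Finset.sum_congr rfl fun i _ => ?_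
            by_cases h : (i : ℕ) < k <;> simp [hχ, h]
        _ = ∑ m ∈ range k, (if h : m < n then ((μ (τ ⟨m, h⟩) : ℝ) : ℂ) else 0) :=
            sum_univ_ite_lt hk _
        _ = ((∑ i ∈ range k, Mu i : ℝ) : ℂ) := by
            rw [Complex.ofReal_sum]
            refine Finset.sum_congr rfl fun m hm => ?_
            simp only [hMu]
            split <;> simp
    have hΦA : Φ A = ∑ i, (d i : ℂ) • Φ (E i) := by
      conv_lhs => rw [hA_sum]
      rw [map_sum]
      exact Finset.sum_congr rfl fun i _ => Φ.map_smul _ _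
    have hPB2 : (P * B).trace = ((∑ i, d i * t i : ℝ) : ℂ) := by
      have h1 : P * B = ∑ i, (d i : ℂ) • (P * Φ (E i)) := by
        rw [hB, hΦA, Finset.mul_sum]
        exact Finset.sum_congr rfl fun i _ => (mul_smul_comm _ _ _)
      rw [h1, Matrix.trace_sum]
      rw [Complex.ofReal_sum]
      refine Finset.sum_congr rfl fun i _ => ?_
      rw [Matrix.trace_smul, htr i, smul_eq_mul]
      push_cast
      ring
    have hreal : ∑ i ∈ range k, Mu i = ∑ i, d i * t i := by
      have := hPB.symm.trans hPB2
      exact_mod_cast this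
    set T : ℕ → ℝ := fun m => if h : m < n then t (σ ⟨m, h⟩) else 0 with hT
    have hDT : ∑ i, d i * t i = ∑ m ∈ range n, D m * T m := by
      calc ∑ i, d i * t i = ∑ i, d (σ i) * t (σ i) := (Equiv.sum_comp σ _).symm
        _ = ∑ m ∈ range n, (if h : m < n then d (σ ⟨m, h⟩) * t (σ ⟨m, h⟩) else 0) :=
            (sum_range_dite _).symm
        _ = ∑ m ∈ range n, D m * T m := by
            refine Finset.sum_congr rfl fun m hm => ?_
            have hmn := Finset.mem_range.mp hm
            simp [hD, hT, hmn]
    have hTsum : ∑ m ∈ range n, T m = (k : ℝ) := by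
      have e1 : ∑ m ∈ range n, T m = ∑ i, t (σ i) := sum_range_dite fun i => t (σ i)
      rw [e1, Equiv.sum_comp σ t, hsumt]
    have hT0 : ∀ m < n, 0 ≤ T m := by
      intro m hm
      simp only [hT, dif_pos hm]
      exact ht0 _
    have hT1 : ∀ m < n, T m ≤ 1 := by
      intro m hm
      simp only [hT, dif_pos hm]
      exact ht1 _
    calc ∑ i ∈ range k, Mu i = ∑ m ∈ range n, D m * T m := hreal.trans hDT
      _ ≤ ∑ i ∈ range k, D i := aux_greedy n k hk D T hD_anti hT0 hT1 hTsum
  -- conclude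
  have hfinal : ∏ i ∈ range n, D i ≤ ∏ i ∈ range n, Mu i :=
    aux_prod n D Mu hD_pos hMu_anti hmaj htot
  have hprodD : ∏ i ∈ range n, D i = ∏ i, d i := by
    calc ∏ i ∈ range n, D i = ∏ i : Fin n, D i.val := (Fin.prod_univ_eq_prod_range _ n).symm
      _ = ∏ i : Fin n, d (σ i) := Finset.prod_congr rfl (fun i _ => by simp [hD])
      _ = ∏ i, d i := Equiv.prod_comp σ d
  have hprodM : ∏ i ∈ range n, Mu i = ∏ i, μ i := by
    calc ∏ i ∈ range n, Mu i = ∏ i : Fin n, Mu i.val := (Fin.prod_univ_eq_prod_range _ n).symm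
      _ = ∏ i : Fin n, μ (τ i) := Finset.prod_congr rfl (fun i _ => by simp [hMu])
      _ = ∏ i, μ i := Equiv.prod_comp τ μ
  have hfin2 : ∏ i, d i ≤ ∏ i, μ i := by rw [← hprodD, ← hprodM]; exact hfinal
  have hfin3 : ((∏ i, d i : ℝ) : ℂ) ≤ ((∏ i, μ i : ℝ) : ℂ) := Complex.real_le_real.mpr hfin2
  rw [Complex.ofReal_prod, Complex.ofReal_prod] at hfin3
  rw [hH.det_eq_prod_eigenvalues, hBH.det_eq_prod_eigenvalues]
  exact hfin3

end Core


/-- **Hadamard-type determinant inequalities for trace-preserving unital positive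
maps.** Let `Φ` be a trace-preserving unital positive linear map on `n × n` complex
matrices.  Then (i) `det A ≤ det (Φ A)` for every positive semidefinite `A` (both
determinants being nonnegative reals, compared in the standard partial order on `ℂ`);
and (ii) for every positive definite `A`, the matrix `Φ (A⁻¹)` is positive definite and
`(det (Φ (A⁻¹)))⁻¹ ≤ det A`, i.e. `1 ≤ det A * det (Φ (A⁻¹))`. -/
theorem det_le_det_of_trace_preserving_unital_positive {n : ℕ}
    (Φ : Matrix (Fin n) (Fin n) ℂ →ₗ[ℂ] Matrix (Fin n) (Fin n) ℂ)
    (hΦ_unital : Φ 1 = 1)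
    (hΦ_pos : ∀ X : Matrix (Fin n) (Fin n) ℂ, X.PosSemidef → (Φ X).PosSemidef)
    (hΦ_trace : ∀ X : Matrix (Fin n) (Fin n) ℂ, (Φ X).trace = X.trace) :
    (∀ A : Matrix (Fin n) (Fin n) ℂ, A.PosSemidef →
      0 ≤ A.det ∧ A.det ≤ (Φ A).det) ∧
    (∀ A : Matrix (Fin n) (Fin n) ℂ, A.PosDef →
      (Φ A⁻¹).PosDef ∧ ((Φ A⁻¹).det)⁻¹ ≤ A.det ∧ 1 ≤ A.det * (Φ A⁻¹).det) := by
  have det_psd : ∀ X : Matrix (Fin n) (Fin n) ℂ, X.PosSemidef → 0 ≤ X.det := by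
    intro X hX
    rw [hX.isHermitian.det_eq_prod_eigenvalues]
    have h1 : ((∏ i, hX.isHermitian.eigenvalues i : ℝ) : ℂ)
        = ∏ i, ((hX.isHermitian.eigenvalues i : ℝ) : ℂ) := Complex.ofReal_prod _ _
    have h2 : (0 : ℝ) ≤ ∏ i, hX.isHermitian.eigenvalues i :=
      Finset.prod_nonneg fun i _ => hX.eigenvalues_nonneg i
    have := Complex.real_le_real.mpr h2
    rw [h1] at this
    simpa using this
  constructor
  · intro A hA
    refine ⟨det_psd A hA, ?_⟩
    by_cases hdet : A.det = 0
    · rw [hdet]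
      exact det_psd _ (hΦ_pos A hA)
    · exact core_det_le Φ hΦ_unital hΦ_pos hΦ_trace (posDef_of_posSemidef_det_ne_zero_s18 hA hdet)
  · intro A hA
    have hAinv : A⁻¹.PosDef := hA.inv
    have hPSD : (Φ A⁻¹).PosSemidef := hΦ_pos _ hAinv.posSemidef
    have hcore : A⁻¹.det ≤ (Φ A⁻¹).det :=
      core_det_le Φ hΦ_unital hΦ_pos hΦ_trace hAinv
    -- real determinants
    set a : ℝ := ∏ i, hA.isHermitian.eigenvalues i with ha_def
    have hdetA : A.det = ((a : ℝ) : ℂ) := by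
      rw [hA.isHermitian.det_eq_prod_eigenvalues]
      exact (Complex.ofReal_prod _ _).symm
    have ha : 0 < a := Finset.prod_pos fun i _ => hA.eigenvalues_pos i
    set b : ℝ := ∏ i, hPSD.isHermitian.eigenvalues i with hb_def
    have hdetB : (Φ A⁻¹).det = ((b : ℝ) : ℂ) := by
      rw [hPSD.isHermitian.det_eq_prod_eigenvalues]
      exact (Complex.ofReal_prod _ _).symm
    have hdetAinv : A⁻¹.det = ((a⁻¹ : ℝ) : ℂ) := by
      rw [Matrix.det_nonsing_inv, hdetA]
      rw [Ring.inverse_eq_inv', Complex.ofReal_inv]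
    have hinvb : a⁻¹ ≤ b := by
      rw [hdetAinv, hdetB] at hcore
      exact_mod_cast hcore
    have hb : 0 < b := lt_of_lt_of_le (inv_pos.mpr ha) hinvb
    have hbne : (Φ A⁻¹).det ≠ 0 := by
      rw [hdetB]
      exact_mod_cast hb.ne'
    refine ⟨posDef_of_posSemidef_det_ne_zero_s18 hPSD hbne, ?_, ?_⟩
    · have h1 : b⁻¹ ≤ a := by
        rw [← inv_inv a]
        exact inv_anti₀ (inv_pos.mpr ha) hinvb
      rw [hdetB, hdetA, ← Complex.ofReal_inv]
      exact Complex.real_le_real.mpr h1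
    · have h1 : (1 : ℝ) ≤ a * b := by
        have : a * a⁻¹ ≤ a * b := by
          exact mul_le_mul_of_nonneg_left hinvb (le_of_lt ha)
        rwa [mul_inv_cancel₀ (ne_of_gt ha)] at this
      rw [hdetA, hdetB, ← Complex.ofReal_mul, ← Complex.ofReal_one]
      exact Complex.real_le_real.mpr h1
end

section
/- Let Φ : M_n(ℂ) → M_n(ℂ) be a trace-preserving unital positive linear map, let A be a positive definite n×n complex matrix and B a positive semidefinite n×n complex matrix. Then det(A + B)/det(A) ≤ det(Φ(A) + Φ(B)) · det(Φ(A⁻¹)), where all determinants are positive reals (A + B, Φ(A) + Φ(B) and Φ(A⁻¹) are positive definite). -/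
open scoped ComplexOrder
open Matrix Finset

private lemma rpow_sum_eq {m : ℕ} {x : ℝ} (hx : 0 < x) (w : Fin m → ℝ) :
    x ^ (∑ j, w j) = ∏ j, x ^ (w j) := by
  rw [Real.rpow_def_of_pos hx, Finset.mul_sum, Real.exp_sum]
  exact Finset.prod_congr rfl fun j _ => (Real.rpow_def_of_pos hx _).symm

private lemma diag_entry_nonneg {m : ℕ} {M : Matrix (Fin m) (Fin m) ℂ}
    (hM : M.PosSemidef) (j : Fin m) : 0 ≤ M j j := by
  have := hM.diag_nonneg (i := j)
  simpa [dotProduct, Matrix.mulVec, Pi.single_apply] using this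

private lemma posDef_of_psd_det_ne_zero {m : ℕ} {M : Matrix (Fin m) (Fin m) ℂ}
    (hM : M.PosSemidef) (h : M.det ≠ 0) : M.PosDef := by
  exact hM.posDef_iff_det_ne_zero.mpr h

private lemma diagonal_eq_sum {m : ℕ} (d : Fin m → ℂ) :
    diagonal d = ∑ i, d i • Matrix.single i i 1 := by
  ext j k
  simp only [Matrix.sum_apply, Pi.smul_apply, smul_eq_mul, Matrix.single, diagonal,
    Matrix.of_apply, Matrix.smul_apply]
  by_cases h : j = k
  · subst h; simp
  · simp [h, Ne.symm h, fun i => (show ¬(i = j ∧ i = k) from fun ⟨a, b⟩ => h (a ▸ b ▸ rfl))]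

private lemma stdBasis_psd_s19 {m : ℕ} (i : Fin m) : (Matrix.single i i (1:ℂ)).PosSemidef := by
  have h : Matrix.single i i (1:ℂ) = diagonal (Pi.single i 1) := by
    ext j k
    simp only [Matrix.single, Matrix.of_apply, Matrix.diagonal_apply, Pi.single_apply]
    rcases eq_or_ne i j with rfl | hj
    · rcases eq_or_ne i k with rfl | hk
      · simp
      · simp [hk]
    · rcases eq_or_ne j k with rfl | hk
      · simp [hj, Ne.symm hj]
      · simp [hj, hk]
  rw [h]
  exact Matrix.PosSemidef.diagonal (fun j => by
    rcases eq_or_ne j i with h' | h' <;> simp [Pi.single_apply, h'])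

/-- Key lemma: a trace-preserving unital positive map does not decrease the determinant
of a positive definite matrix. -/
private lemma key {n : ℕ}
    (Φ : Matrix (Fin n) (Fin n) ℂ →ₗ[ℂ] Matrix (Fin n) (Fin n) ℂ)
    (hΦ_unital : Φ 1 = 1)
    (hΦ_pos : ∀ X : Matrix (Fin n) (Fin n) ℂ, X.PosSemidef → (Φ X).PosSemidef)
    (hΦ_trace : ∀ X : Matrix (Fin n) (Fin n) ℂ, (Φ X).trace = X.trace)
    {X : Matrix (Fin n) (Fin n) ℂ} (hX : X.PosDef) :
    ∃ a b : ℝ, 0 < a ∧ a ≤ b ∧ X.det = (a : ℂ) ∧ (Φ X).det = (b : ℂ) := by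
  have hH := hX.isHermitian
  set U : Matrix (Fin n) (Fin n) ℂ := ↑hH.eigenvectorUnitary with hU
  set lam := hH.eigenvalues with hlam
  have hlam_pos : ∀ i, 0 < lam i := hX.eigenvalues_pos
  set P : Fin n → Matrix (Fin n) (Fin n) ℂ :=
    fun i => U * Matrix.single i i 1 * star U with hP
  -- X as a sum of scaled rank-one projections
  have hUU : U * star U = 1 := Matrix.mem_unitaryGroup_iff.mp hH.eigenvectorUnitary.2
  have hUU' : star U * U = 1 := Matrix.mem_unitaryGroup_iff'.mp hH.eigenvectorUnitary.2
  have hXsum : X = ∑ i, (lam i : ℂ) • P i := by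
    conv_lhs => rw [hH.spectral_theorem, Unitary.conjStarAlgAut_apply]
    rw [show RCLike.ofReal ∘ hH.eigenvalues = fun i => ((lam i : ℂ)) from rfl,
      diagonal_eq_sum, Finset.mul_sum, Finset.sum_mul]
    exact Finset.sum_congr rfl fun i _ => by
      rw [Matrix.mul_smul, Matrix.smul_mul]
  set Q : Fin n → Matrix (Fin n) (Fin n) ℂ := fun i => Φ (P i) with hQ
  have hEpsd : ∀ i : Fin n, (Matrix.single i i (1:ℂ)).PosSemidef :=
    fun i => stdBasis_psd_s19 i
  have hPpsd : ∀ i, (P i).PosSemidef := fun i =>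
    by simpa [hP, Matrix.star_eq_conjTranspose] using (hEpsd i).mul_mul_conjTranspose_same U
  have hQpsd : ∀ i, (Q i).PosSemidef := fun i => hΦ_pos _ (hPpsd i)
  have hPsum : ∑ i, P i = 1 := by
    have : ∑ i : Fin n, Matrix.single i i (1:ℂ) = (1 : Matrix (Fin n) (Fin n) ℂ) := by
      have := diagonal_eq_sum (fun _ : Fin n => (1:ℂ))
      simpa [Matrix.diagonal_one] using this.symm
    calc ∑ i, P i = U * (∑ i : Fin n, Matrix.single i i (1:ℂ)) * star U := by
          rw [Finset.mul_sum, Finset.sum_mul]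
      _ = 1 := by rw [this, mul_one, hUU]
  have hQsum : ∑ i, Q i = 1 := by
    rw [hQ, ← map_sum, hPsum, hΦ_unital]
  have hPtrace : ∀ i, (P i).trace = 1 := by
    intro i
    rw [hP]
    calc (U * Matrix.single i i 1 * star U).trace
        = (star U * (U * Matrix.single i i 1)).trace := (Matrix.trace_mul_comm _ _)
      _ = (Matrix.single i i (1:ℂ)).trace := by rw [← mul_assoc, hUU', one_mul]
      _ = 1 := Matrix.trace_single_eq_same i 1
  have hQtrace : ∀ i, (Q i).trace = 1 := fun i => (hΦ_trace (P i)).trans (hPtrace i)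
  -- eigen-decomposition of Φ X
  have hYpsd : (Φ X).PosSemidef := hΦ_pos X hX.posSemidef
  have hYH := hYpsd.1
  set V : Matrix (Fin n) (Fin n) ℂ := ↑hYH.eigenvectorUnitary with hV
  set mu := hYH.eigenvalues with hmu
  have hmu_nonneg : ∀ j, 0 ≤ mu j := hYpsd.eigenvalues_nonneg
  have hVV : V * star V = 1 := Matrix.mem_unitaryGroup_iff.mp hYH.eigenvectorUnitary.2
  have hVV' : star V * V = 1 := Matrix.mem_unitaryGroup_iff'.mp hYH.eigenvectorUnitary.2
  set R : Fin n → Matrix (Fin n) (Fin n) ℂ := fun i => star V * Q i * V with hR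
  have hRpsd : ∀ i, (R i).PosSemidef := fun i => by
    simpa [hR, Matrix.star_eq_conjTranspose] using (hQpsd i).conjTranspose_mul_mul_same V
  set s : Fin n → Fin n → ℝ := fun j i => (R i j j).re with hs
  have hRentry : ∀ i j, R i j j = (s j i : ℂ) := by
    intro i j
    have h0 := diag_entry_nonneg (hRpsd i) j
    rw [Complex.nonneg_iff] at h0
    exact Complex.ext rfl h0.2.symm
  have hs_nonneg : ∀ j i, 0 ≤ s j i := by
    intro j i
    have h0 := diag_entry_nonneg (hRpsd i) j
    rw [Complex.nonneg_iff] at h0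
    exact h0.1
  have hrow : ∀ j, ∑ i, s j i = 1 := by
    intro j
    have h1 : ∑ i, R i = 1 := by
      calc ∑ i, R i = star V * (∑ i, Q i) * V := by rw [Finset.mul_sum, Finset.sum_mul]
        _ = 1 := by rw [hQsum, mul_one, hVV']
    have h2 : (∑ i, R i) j j = 1 := by rw [h1]; simp [Matrix.one_apply]
    have h3 : ∑ i, R i j j = 1 := by rw [← h2]; simp [Matrix.sum_apply]
    have : ((∑ i, s j i : ℝ) : ℂ) = 1 := by
      push_cast
      rw [← h3]
      exact Finset.sum_congr rfl fun i _ => (hRentry i j).symm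
    exact_mod_cast this
  have hcol : ∀ i, ∑ j, s j i = 1 := by
    intro i
    have h1 : (R i).trace = 1 := by
      calc (R i).trace = (V * star V * Q i).trace := by
            rw [hR, Matrix.trace_mul_comm, ← mul_assoc]
      _ = 1 := by rw [hVV, one_mul, hQtrace i]
    have : ((∑ j, s j i : ℝ) : ℂ) = 1 := by
      push_cast
      rw [← h1, Matrix.trace]
      exact Finset.sum_congr rfl fun j _ => (hRentry i j).symm
    exact_mod_cast this
  have hmu_eq : ∀ j, mu j = ∑ i, s j i * lam i := by
    intro j
    have hdiag : star V * Φ X * V = diagonal (RCLike.ofReal ∘ mu) := by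
      have := hYH.conjStarAlgAut_star_eigenvectorUnitary
      rw [Unitary.conjStarAlgAut_star_apply] at this
      exact this
    have hYsum : Φ X = ∑ i, (lam i : ℂ) • Q i := by
      conv_lhs => rw [hXsum, map_sum]
      exact Finset.sum_congr rfl fun i _ => map_smul Φ _ _
    have h1 : (mu j : ℂ) = (star V * Φ X * V) j j := by
      rw [hdiag]; simp
    have h2 : star V * Φ X * V = ∑ i, (lam i : ℂ) • R i := by
      rw [hYsum, Finset.mul_sum, Finset.sum_mul]
      exact Finset.sum_congr rfl fun i _ => by
        rw [Matrix.mul_smul, Matrix.smul_mul]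
    have h3 : (mu j : ℂ) = ∑ i, (lam i : ℂ) * (s j i : ℂ) := by
      rw [h1, h2]
      simp only [Matrix.sum_apply, Matrix.smul_apply, smul_eq_mul]
      exact Finset.sum_congr rfl fun i _ => by rw [hRentry i j]
    have : (mu j : ℂ) = ((∑ i, s j i * lam i : ℝ) : ℂ) := by
      rw [h3]; push_cast; exact Finset.sum_congr rfl fun i _ => mul_comm _ _
    exact_mod_cast this
  -- the real inequality
  have hmain : ∏ i, lam i ≤ ∏ j, mu j := by
    calc ∏ i, lam i = ∏ i, lam i ^ (∑ j, s j i) := by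
          refine Finset.prod_congr rfl fun i _ => ?_
          rw [hcol i, Real.rpow_one]
      _ = ∏ i, ∏ j, lam i ^ (s j i) := Finset.prod_congr rfl fun i _ =>
          rpow_sum_eq (hlam_pos i) _
      _ = ∏ j, ∏ i, lam i ^ (s j i) := Finset.prod_comm
      _ ≤ ∏ j, mu j := by
          refine Finset.prod_le_prod (fun j _ => Finset.prod_nonneg fun i _ =>
            Real.rpow_nonneg (hlam_pos i).le _) (fun j _ => ?_)
          rw [hmu_eq j]
          exact Real.geom_mean_le_arith_mean_weighted Finset.univ (s j) lam
            (fun i _ => hs_nonneg j i) (hrow j) (fun i _ => (hlam_pos i).le)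
  refine ⟨∏ i, lam i, ∏ j, mu j, Finset.prod_pos (fun i _ => hlam_pos i), hmain, ?_, ?_⟩
  · rw [hH.det_eq_prod_eigenvalues]; push_cast; rfl
  · rw [hYH.det_eq_prod_eigenvalues]; push_cast; rfl

/-- **A Matic-type determinant inequality for trace-preserving unital positive maps.**
Let `Φ` be a trace-preserving unital positive linear map on `n × n` complex matrices,
`A` positive definite and `B` positive semidefinite.  Then `A + B`, `Φ A + Φ B` and
`Φ (A⁻¹)` are positive definite and
`det (A + B) / det A ≤ det (Φ A + Φ B) * det (Φ (A⁻¹))` (all determinants being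
positive reals, compared in the standard partial order on `ℂ`). -/
theorem det_ratio_le_of_trace_preserving_unital_positive {n : ℕ}
    (Φ : Matrix (Fin n) (Fin n) ℂ →ₗ[ℂ] Matrix (Fin n) (Fin n) ℂ)
    (hΦ_unital : Φ 1 = 1)
    (hΦ_pos : ∀ X : Matrix (Fin n) (Fin n) ℂ, X.PosSemidef → (Φ X).PosSemidef)
    (hΦ_trace : ∀ X : Matrix (Fin n) (Fin n) ℂ, (Φ X).trace = X.trace)
    {A B : Matrix (Fin n) (Fin n) ℂ} (hA : A.PosDef) (hB : B.PosSemidef) :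
    (A + B).PosDef ∧ (Φ A + Φ B).PosDef ∧ (Φ A⁻¹).PosDef ∧
      (A + B).det / A.det ≤ (Φ A + Φ B).det * (Φ A⁻¹).det := by
  have hAB : (A + B).PosDef := hA.add_posSemidef hB
  have hAinv : (A⁻¹).PosDef := hA.inv
  obtain ⟨a₁, b₁, ha₁, hab₁, hdet₁, hdet₁'⟩ := key Φ hΦ_unital hΦ_pos hΦ_trace hAB
  obtain ⟨a₂, b₂, ha₂, hab₂, hdet₂, hdet₂'⟩ := key Φ hΦ_unital hΦ_pos hΦ_trace hAinv
  have hΦAB : Φ A + Φ B = Φ (A + B) := (map_add Φ A B).symm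
  have hb₁ : (0:ℝ) < b₁ := lt_of_lt_of_le ha₁ hab₁
  have hb₂ : (0:ℝ) < b₂ := lt_of_lt_of_le ha₂ hab₂
  have hΦABpd : (Φ A + Φ B).PosDef := by
    rw [hΦAB]
    exact posDef_of_psd_det_ne_zero (hΦ_pos _ hAB.posSemidef)
      (by rw [hdet₁']; exact_mod_cast hb₁.ne')
  have hΦAinvpd : (Φ A⁻¹).PosDef := by
    exact posDef_of_psd_det_ne_zero (hΦ_pos _ hAinv.posSemidef)
      (by rw [hdet₂']; exact_mod_cast hb₂.ne')
  refine ⟨hAB, hΦABpd, hΦAinvpd, ?_⟩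
  have hAdet : A.det ≠ 0 := hA.det_pos.ne'
  have hAinvdet : (A⁻¹).det = (A.det)⁻¹ := by
    rw [Matrix.det_nonsing_inv, Ring.inverse_eq_inv']
  have hLHS : (A + B).det / A.det = ((a₁ * a₂ : ℝ) : ℂ) := by
    rw [div_eq_mul_inv, ← hAinvdet, hdet₁, hdet₂]
    push_cast; ring
  have hRHS : (Φ A + Φ B).det * (Φ A⁻¹).det = ((b₁ * b₂ : ℝ) : ℂ) := by
    rw [hΦAB, hdet₁', hdet₂']
    push_cast; ring
  rw [hLHS, hRHS, Complex.real_le_real]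
  exact mul_le_mul hab₁ hab₂ ha₂.le hb₁.le
end
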